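/- arXiv:math/9904071 — 7 statements merged into one kernel-verified Lean document; each statement's English description precedes it below -/
import Mathlib

section
/- Let L be a nonempty finite set of linear forms on ℝ^n, define the Newton weight of a monomial x^α as w(α) = min_{l∈L} l(α), and define a total order ≺ on monomials by x^α ≺ x^β iff w(α) > w(β), or w(α) = w(β) and x^α ≺₀ x^β for a fixed semigroup (monomial) order ≺₀. Then ≺ is normal: for all polynomials f ≠ 0 and monomials x^α with x^α ≺ 1, the ≺-lead monomial of x^α f is strictly ≺-smaller than the ≺-lead monomial of f. -/
open MvPolynomial

/-- The lead monomial (exponent vector) of a polynomial with respect to a total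
order `ord` on monomials; junk value `0` for the zero polynomial. -/
noncomputable def leadMonomial {n : ℕ} {K : Type*} [CommRing K]
    (ord : LinearOrder (Fin n →₀ ℕ)) (f : MvPolynomial (Fin n) K) : Fin n →₀ ℕ :=
  letI := ord
  if h : f.support.Nonempty then f.support.max' h else 0

/-- The Newton weight `w_δ(α) = min_{l ∈ L} l(α + δ)` of an exponent vector. -/
noncomputable def newtonWeight {n : ℕ}
    (L : Finset ((Fin n → ℝ) →ₗ[ℝ] ℝ)) (hL : L.Nonempty)
    (δ : Fin n → ℝ) (μ : Fin n →₀ ℕ) : ℝ :=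
  L.inf' hL fun l => l ((fun i => (μ i : ℝ)) + δ)

lemma newtonWeight_zero {n : ℕ} (L : Finset ((Fin n → ℝ) →ₗ[ℝ] ℝ)) (hL : L.Nonempty) :
    newtonWeight L hL 0 (0 : Fin n →₀ ℕ) = 0 := by
  unfold newtonWeight
  have : ∀ l ∈ L, l ((fun i => (((0 : Fin n →₀ ℕ)) i : ℝ)) + 0) = 0 := by
    intro l _
    have : ((fun i => (((0 : Fin n →₀ ℕ)) i : ℝ)) + 0) = (0 : Fin n → ℝ) := by
      funext i; simp
    rw [this, map_zero]
  rw [Finset.inf'_congr hL rfl this]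
  simp

lemma newtonWeight_add_ge {n : ℕ} (L : Finset ((Fin n → ℝ) →ₗ[ℝ] ℝ)) (hL : L.Nonempty)
    (a b : Fin n →₀ ℕ) :
    newtonWeight L hL 0 a + newtonWeight L hL 0 b ≤ newtonWeight L hL 0 (a + b) := by
  unfold newtonWeight
  obtain ⟨l, hl, hle⟩ := Finset.exists_mem_eq_inf' hL
    (fun l => l ((fun i => (((a + b) : Fin n →₀ ℕ) i : ℝ)) + 0))
  rw [hle]
  have hsplit : ((fun i => (((a + b) : Fin n →₀ ℕ) i : ℝ)) + 0)
      = ((fun i => ((a i : ℝ))) + 0) + ((fun i => ((b i : ℝ))) + 0) := by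
    funext i; simp [Finsupp.add_apply]
  rw [hsplit, map_add]
  exact add_le_add (Finset.inf'_le _ hl) (Finset.inf'_le _ hl)

/-- the Newton ordering with `δ = 0` (refining decreasing Newton weight
by a semigroup order `ord₀`) is normal: `x^α ≺ 1` implies `LM(x^α f) ≺ LM(f)`. -/
theorem newton_ordering_delta_zero_normal {n : ℕ} {K : Type*} [Field K]
    (L : Finset ((Fin n → ℝ) →ₗ[ℝ] ℝ)) (hL : L.Nonempty)
    (ord₀ ord : LinearOrder (Fin n →₀ ℕ))
    (hsg : ∀ a b c : Fin n →₀ ℕ, ord₀.lt a b → ord₀.lt (a + c) (b + c))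
    (hord : ∀ a b : Fin n →₀ ℕ, ord.lt a b ↔
      (newtonWeight L hL 0 b < newtonWeight L hL 0 a ∨
        (newtonWeight L hL 0 a = newtonWeight L hL 0 b ∧ ord₀.lt a b)))
    (f : MvPolynomial (Fin n) K) (hf : f ≠ 0)
    (α : Fin n →₀ ℕ) (hα : ord.lt α 0) :
    ord.lt (leadMonomial ord (monomial α (1 : K) * f)) (leadMonomial ord f) := by
  set w := newtonWeight L hL 0 with hw
  have hw0 : w 0 = 0 := newtonWeight_zero L hL
  -- support of the product
  have hsupp : (monomial α (1 : K) * f).support = f.support.map (addLeftEmbedding α) := by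
    rw [← single_eq_monomial]
    exact AddMonoidAlgebra.support_coeff_single_mul f 1 (fun y => by simp) α
  have hfs : f.support.Nonempty := MvPolynomial.support_nonempty.mpr hf
  have hps : (monomial α (1 : K) * f).support.Nonempty := by
    rw [hsupp]; exact hfs.map
  -- key claim: for γ in support f, α + γ ≺ LM f
  letI := ord
  have hβ : leadMonomial ord f = f.support.max' hfs := by
    unfold leadMonomial; rw [dif_pos hfs]
  set β := f.support.max' hfs with hβdef
  have hβmem : β ∈ f.support := f.support.max'_mem hfs
  have key : ∀ γ ∈ f.support, ord.lt (α + γ) β := by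
    intro γ hγ
    have hγβ : ord.le γ β := f.support.le_max' γ hγ
    have hwγβ : w β ≤ w γ := by
      rcases @eq_or_lt_of_le _ ord.toPartialOrder _ _ hγβ with h | h
      · rw [h]
      · rcases (hord γ β).mp h with h | ⟨h, _⟩
        · exact h.le
        · exact h.ge
    have hsup : w α + w γ ≤ w (α + γ) := newtonWeight_add_ge L hL α γ
    rcases (hord α 0).mp hα with h | ⟨h, h0⟩
    · -- w α > 0
      rw [hw0] at h
      refine (hord (α + γ) β).mpr (Or.inl ?_)
      calc w β ≤ w γ := hwγβ
        _ < w α + w γ := by linarith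
        _ ≤ w (α + γ) := hsup
    · -- w α = 0, α ≺₀ 0
      rw [hw0] at h
      have hle : w β ≤ w (α + γ) := by linarith
      rcases eq_or_lt_of_le hle with heq | hlt
      · refine (hord (α + γ) β).mpr (Or.inr ⟨heq.symm, ?_⟩)
        have h1 : ord₀.lt (α + γ) γ := by
          have := hsg α 0 γ h0
          simpa using this
        rcases @eq_or_lt_of_le _ ord.toPartialOrder _ _ hγβ with h2 | h2
        · rw [h2] at h1 ⊢; exact h1
        · rcases (hord γ β).mp h2 with h3 | ⟨_, h3⟩
          · -- w β < w γ, contradicts weights: w(α+γ) = w β but w(α+γ) ≥ w α + w γ = w γ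
            exfalso
            have : w γ ≤ w (α + γ) := by linarith
            rw [← heq] at this
            linarith
          · exact @lt_trans _ ord₀.toPartialOrder.toPreorder _ _ _ h1 h3
      · exact (hord (α + γ) β).mpr (Or.inl hlt)
  -- now LM of product
  have hLMp : leadMonomial ord (monomial α (1 : K) * f)
      ∈ (monomial α (1 : K) * f).support := by
    unfold leadMonomial; rw [dif_pos hps]; exact Finset.max'_mem _ _
  rw [hsupp, Finset.mem_map] at hLMp
  obtain ⟨γ, hγ, hγeq⟩ := hLMp
  rw [hβ, ← hγeq]
  have : addLeftEmbedding α γ = α + γ := rfl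
  rw [this]
  exact key γ hγ
end

section
/- Let L be a rational nonempty finite set of linear forms on ℝ^n, δ ∈ (ℚ≥0)^n, and for l ∈ L let M_δ(l) = { x^α | w_δ(α) = l(α+δ) } and M(l) = { x^α | w(α) = l(α) } (with w the δ = 0 weight). If f is a nonzero polynomial whose ≺-lead monomial LM(f) lies in M_δ(l), then for every monomial x^β ∈ M(l), LM(x^β f) = x^β · LM(f). -/
open MvPolynomial

/-- if `LM(f) ∈ M_δ(l)` and `x^β ∈ M(l)`, then
`LM(x^β f) = x^β · LM(f)`, for a Newton ordering attached to a rational `L`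
and `δ ∈ (ℚ≥0)^n`. -/
theorem leadMonomial_mul_monomial_in_cone {n : ℕ} {K : Type*} [Field K]
    (L : Finset ((Fin n → ℝ) →ₗ[ℝ] ℝ)) (hL : L.Nonempty)
    (hrat : ∀ l ∈ L, ∀ i : Fin n, ∃ q : ℚ, l (Pi.single i 1) = (q : ℝ))
    (δ : Fin n → ℚ) (hδ : ∀ i, 0 ≤ δ i)
    (ord₀ ord : LinearOrder (Fin n →₀ ℕ))
    (hsg : ∀ a b c : Fin n →₀ ℕ, ord₀.lt a b → ord₀.lt (a + c) (b + c))
    (hord : ∀ a b : Fin n →₀ ℕ, ord.lt a b ↔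
      (newtonWeight L hL (fun i => (δ i : ℝ)) b <
          newtonWeight L hL (fun i => (δ i : ℝ)) a ∨
        (newtonWeight L hL (fun i => (δ i : ℝ)) a =
            newtonWeight L hL (fun i => (δ i : ℝ)) b ∧ ord₀.lt a b)))
    (l : (Fin n → ℝ) →ₗ[ℝ] ℝ) (hl : l ∈ L)
    (f : MvPolynomial (Fin n) K) (hf : f ≠ 0)
    (hfl : newtonWeight L hL (fun i => (δ i : ℝ)) (leadMonomial ord f) =
      l ((fun i => ((leadMonomial ord f) i : ℝ)) + fun i => (δ i : ℝ)))
    (β : Fin n →₀ ℕ)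
    (hβ : newtonWeight L hL 0 β = l (fun i => (β i : ℝ))) :
    leadMonomial ord (monomial β (1 : K) * f) = β + leadMonomial ord f := by
  classical
  set w : (Fin n →₀ ℕ) → ℝ := newtonWeight L hL (fun i => (δ i : ℝ)) with hw
  set w0 : (Fin n →₀ ℕ) → ℝ := newtonWeight L hL 0 with hw0
  have hcast : ∀ μ ν : Fin n →₀ ℕ,
      (fun i => (((μ + ν) i : ℕ) : ℝ)) = (fun i => ((μ i : ℕ) : ℝ)) + fun i => ((ν i : ℕ) : ℝ) := by
    intro μ ν
    funext i
    simp [Finsupp.add_apply]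
  -- superadditivity : w0 β + w ν ≤ w (β + ν)
  have superadd : ∀ ν : Fin n →₀ ℕ, w0 β + w ν ≤ w (β + ν) := by
    intro ν
    have hmain : ∀ l' ∈ L, w0 β + w ν ≤
        l' ((fun i => (((β + ν) i : ℕ) : ℝ)) + fun i => ((δ i : ℚ) : ℝ)) := by
      intro l' hl'
      have h1 : w0 β ≤ l' ((fun i => ((β i : ℕ) : ℝ)) + 0) := Finset.inf'_le _ hl'
      have h2 : w ν ≤ l' ((fun i => ((ν i : ℕ) : ℝ)) + fun i => ((δ i : ℚ) : ℝ)) :=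
        Finset.inf'_le _ hl'
      have heq : l' ((fun i => (((β + ν) i : ℕ) : ℝ)) + fun i => ((δ i : ℚ) : ℝ)) =
          l' ((fun i => ((β i : ℕ) : ℝ)) + 0) +
            l' ((fun i => ((ν i : ℕ) : ℝ)) + fun i => ((δ i : ℚ) : ℝ)) := by
        rw [← map_add]
        congr 1
        rw [hcast]
        abel
      rw [heq]
      linarith
    exact Finset.le_inf' hL _ hmain
  set LM : Fin n →₀ ℕ := leadMonomial ord f with hLM
  -- equality at the lead monomial
  have hEq : w (β + LM) = w0 β + w LM := by
    refine le_antisymm ?_ (superadd LM)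
    have hle : w (β + LM) ≤
        l ((fun i => (((β + LM) i : ℕ) : ℝ)) + fun i => ((δ i : ℚ) : ℝ)) :=
      Finset.inf'_le _ hl
    have heq : l ((fun i => (((β + LM) i : ℕ) : ℝ)) + fun i => ((δ i : ℚ) : ℝ)) =
        l (fun i => ((β i : ℕ) : ℝ)) +
          l ((fun i => ((LM i : ℕ) : ℝ)) + fun i => ((δ i : ℚ) : ℝ)) := by
      rw [← map_add]
      congr 1
      rw [hcast]
      abel
    rw [heq, ← hβ, ← hfl] at hle
    exact hle
  -- support of the product
  have hne : f.support.Nonempty := by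
    rw [Finset.nonempty_iff_ne_empty]
    simpa [MvPolynomial.support_eq_empty] using hf
  have hsupp : (monomial β (1 : K) * f).support = f.support.map (addLeftEmbedding β) := by
    rw [show (monomial β (1 : K)) = AddMonoidAlgebra.single β (1 : K) from rfl]
    exact AddMonoidAlgebra.support_coeff_single_mul f 1 (fun y => by simp) β
  have hne' : (monomial β (1 : K) * f).support.Nonempty := by
    rw [hsupp]
    exact Finset.Nonempty.map hne
  -- LM f is the max of f.support
  have hLMmem : LM ∈ f.support := by
    rw [hLM, leadMonomial, dif_pos hne]
    exact Finset.max'_mem _ hne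
  have hLMmax : ∀ α ∈ f.support, ord.le α LM := by
    intro α hα
    rw [hLM, leadMonomial, dif_pos hne]
    exact @Finset.le_max' _ ord _ α hα
  -- the key comparison lemma
  have hkey : ∀ α ∈ f.support, ord.le (β + α) (β + LM) := by
    intro α hα
    rcases @lt_or_eq_of_le _ ord.toPartialOrder α LM (hLMmax α hα) with hlt | rfl
    · refine @le_of_lt _ ord.toPreorder _ _ ?_
      rw [hord]
      rcases (hord α LM).mp hlt with hw1 | ⟨hw1, h0⟩
      · left
        have := superadd α
        linarith [hEq]
      · have hge : w (β + LM) ≤ w (β + α) := by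
          have := superadd α
          linarith [hEq]
        rcases lt_or_eq_of_le hge with h | h
        · exact Or.inl h
        · refine Or.inr ⟨h.symm, ?_⟩
          have := hsg α LM β h0
          rwa [add_comm α β, add_comm LM β] at this
    · exact @le_refl _ ord.toPreorder _
  -- conclude
  rw [leadMonomial, dif_pos hne']
  refine @le_antisymm _ ord.toPartialOrder _ _ ?_ ?_
  · refine @Finset.max'_le _ ord _ _ _ ?_
    intro s hs
    rw [hsupp, Finset.mem_map] at hs
    obtain ⟨α, hα, rfl⟩ := hs
    rw [addLeftEmbedding_apply]
    exact hkey α hα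
  · refine @Finset.le_max' _ ord _ _ ?_
    rw [hsupp, Finset.mem_map]
    exact ⟨LM, hLMmem, by rw [addLeftEmbedding_apply]⟩
end

section
/- Let L, δ, M_δ(l), M(l) be as in the Newton filtration setup, let I ⊆ K[x₁,…,xₙ] be an ideal and define L(I) = { LM(g) | g ∈ I, g ≠ 0 } with respect to a Newton ordering ≺. Then for each l ∈ L, the set L(I) ∩ M_δ(l) is a cone with respect to M(l): if x^γ ∈ L(I) ∩ M_δ(l) and x^β ∈ M(l) then x^γ x^β ∈ L(I) ∩ M_δ(l). -/
open MvPolynomial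

/-- `L(I) ∩ M_δ(l)` is a cone with respect to `M(l)`:
if `x^γ ∈ L(I) ∩ M_δ(l)` and `x^β ∈ M(l)`, then `x^γ x^β ∈ L(I) ∩ M_δ(l)`. -/
theorem leadMonomialSet_cone {n : ℕ} {K : Type*} [Field K]
    (L : Finset ((Fin n → ℝ) →ₗ[ℝ] ℝ)) (hL : L.Nonempty)
    (hrat : ∀ l ∈ L, ∀ i : Fin n, ∃ q : ℚ, l (Pi.single i 1) = (q : ℝ))
    (δ : Fin n → ℚ) (hδ : ∀ i, 0 ≤ δ i)
    (ord₀ ord : LinearOrder (Fin n →₀ ℕ))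
    (hsg : ∀ a b c : Fin n →₀ ℕ, ord₀.lt a b → ord₀.lt (a + c) (b + c))
    (hord : ∀ a b : Fin n →₀ ℕ, ord.lt a b ↔
      (newtonWeight L hL (fun i => (δ i : ℝ)) b <
          newtonWeight L hL (fun i => (δ i : ℝ)) a ∨
        (newtonWeight L hL (fun i => (δ i : ℝ)) a =
            newtonWeight L hL (fun i => (δ i : ℝ)) b ∧ ord₀.lt a b)))
    (I : Ideal (MvPolynomial (Fin n) K))
    (l : (Fin n → ℝ) →ₗ[ℝ] ℝ) (hl : l ∈ L)
    (γ : Fin n →₀ ℕ)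
    (hγI : ∃ g ∈ I, g ≠ 0 ∧ leadMonomial ord g = γ)
    (hγl : newtonWeight L hL (fun i => (δ i : ℝ)) γ =
      l ((fun i => (γ i : ℝ)) + fun i => (δ i : ℝ)))
    (β : Fin n →₀ ℕ)
    (hβ : newtonWeight L hL 0 β = l (fun i => (β i : ℝ))) :
    (∃ g ∈ I, g ≠ 0 ∧ leadMonomial ord g = γ + β) ∧
    newtonWeight L hL (fun i => (δ i : ℝ)) (γ + β) =
      l ((fun i => ((γ + β) i : ℝ)) + fun i => (δ i : ℝ)) := by
  classical
  set δ' : Fin n → ℝ := fun i => (δ i : ℝ) with hδ'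
  set W : (Fin n →₀ ℕ) → ℝ := newtonWeight L hL δ' with hW
  set W0 : (Fin n →₀ ℕ) → ℝ := newtonWeight L hL 0 with hW0
  have coe_add : ∀ μ ν : Fin n →₀ ℕ,
      (fun i => (((μ + ν) i : ℕ) : ℝ)) = (fun i => ((μ i : ℕ) : ℝ)) + fun i => ((ν i : ℕ) : ℝ) := by
    intro μ ν
    funext i
    simp [Finsupp.add_apply]
  -- superadditivity : W μ + W0 ν ≤ W (μ + ν)
  have h1 : ∀ μ ν : Fin n →₀ ℕ, W μ + W0 ν ≤ W (μ + ν) := by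
    intro μ ν
    apply Finset.le_inf'
    intro l' hl'
    have e : l' ((fun i => (((μ + ν) i : ℕ) : ℝ)) + δ')
        = l' ((fun i => ((μ i : ℕ) : ℝ)) + δ') + l' ((fun i => ((ν i : ℕ) : ℝ)) + 0) := by
      rw [← map_add]
      congr 1
      rw [coe_add]
      funext i
      simp [Pi.add_apply]
      ring
    rw [e]
    gcongr
    · exact Finset.inf'_le _ hl'
    · exact Finset.inf'_le _ hl'
  -- value of W (γ + β)
  have hval : W (γ + β) = W γ + W0 β := by
    apply le_antisymm
    · have := Finset.inf'_le (f := fun l' => l' ((fun i => (((γ + β) i : ℕ) : ℝ)) + δ')) hl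
      refine this.trans_eq ?_
      rw [coe_add]
      have : (fun i => ((γ i : ℕ) : ℝ)) + (fun i => ((β i : ℕ) : ℝ)) + δ'
          = ((fun i => ((γ i : ℕ) : ℝ)) + δ') + (fun i => ((β i : ℕ) : ℝ)) := by
        funext i; simp [Pi.add_apply]; ring
      rw [this, map_add, hγl, hβ]
    · exact h1 γ β
  have hsecond : W (γ + β) = l ((fun i => (((γ + β) i : ℕ) : ℝ)) + δ') := by
    apply le_antisymm
    · exact Finset.inf'_le _ hl
    · rw [hval, coe_add]
      have : (fun i => ((γ i : ℕ) : ℝ)) + (fun i => ((β i : ℕ) : ℝ)) + δ'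
          = ((fun i => ((γ i : ℕ) : ℝ)) + δ') + (fun i => ((β i : ℕ) : ℝ)) := by
        funext i; simp [Pi.add_apply]; ring
      rw [this, map_add, hγl, hβ]
  refine ⟨?_, hsecond⟩
  -- the lead-monomial part
  obtain ⟨g, hgI, hg0, hLM⟩ := hγI
  refine ⟨(monomial β (1 : K)) * g, I.mul_mem_left _ hgI, ?_, ?_⟩
  · exact mul_ne_zero (fun h => by simpa using h) hg0
  · -- support characterization
    have hsupp : ∀ α : Fin n →₀ ℕ,
        α ∈ ((monomial β (1 : K)) * g).support ↔ ∃ α' ∈ g.support, α = β + α' := by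
      intro α
      rw [mem_support_iff, coeff_monomial_mul']
      constructor
      · intro h
        by_cases hle : β ≤ α
        · rw [if_pos hle, one_mul] at h
          exact ⟨α - β, mem_support_iff.2 h, (add_tsub_cancel_of_le hle).symm⟩
        · rw [if_neg hle] at h; exact absurd rfl h
      · rintro ⟨α', hα', rfl⟩
        rw [if_pos le_self_add, one_mul, add_tsub_cancel_left]
        exact mem_support_iff.1 hα'
    -- key: strict monotonicity against γ
    have hkey : ∀ α' : Fin n →₀ ℕ, ord.lt α' γ → ord.lt (α' + β) (γ + β) := by
      intro α' hlt
      rw [hord] at hlt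
      have hlow : W γ + W0 β ≤ W (α' + β) := by
        rcases hlt with h | ⟨h, _⟩
        · exact (add_le_add_left h.le _).trans (h1 α' β)
        · exact h ▸ h1 α' β
      rcases hlt with h | ⟨heq, h0⟩
      · rw [hord]
        left
        rw [hval]
        calc W γ + W0 β < W α' + W0 β := by linarith
          _ ≤ W (α' + β) := h1 α' β
      · rcases lt_or_eq_of_le hlow with h | h
        · rw [hord]; left; rw [hval]; exact h
        · rw [hord]; right
          exact ⟨by rw [hval, h], hsg _ _ _ h0⟩
    letI := ord
    have hne : ((monomial β (1 : K)) * g).support.Nonempty := by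
      rw [Finset.nonempty_iff_ne_empty, Ne, support_eq_empty]
      exact mul_ne_zero (fun h => by simpa using h) hg0
    have hgne : g.support.Nonempty := by
      rwa [Finset.nonempty_iff_ne_empty, Ne, support_eq_empty]
    have hγmax : γ = g.support.max' hgne := by
      rw [← hLM, leadMonomial, dif_pos hgne]
    rw [leadMonomial, dif_pos hne]
    refine ord.le_antisymm _ _ ?_ ?_
    · refine Finset.max'_le _ hne _ ?_
      intro α hα
      obtain ⟨α', hα', rfl⟩ := (hsupp α).1 hα
      have hle := hγmax ▸ Finset.le_max' _ _ hα'
      rcases @lt_or_eq_of_le _ ord.toPartialOrder _ _ hle with h | h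
      · rw [add_comm β α']
        exact @le_of_lt _ ord.toPartialOrder.toPreorder _ _ (hkey α' h)
      · subst h
        rw [add_comm]
        exact ord.le_refl _
    · refine Finset.le_max' _ _ ?_
      rw [hsupp]
      exact ⟨γ, hγmax ▸ Finset.max'_mem _ _, add_comm γ β⟩
end

section
/- Let ≺ be a Newton ordering associated to a rational finite set L of linear forms and δ ∈ (ℚ≥0)^n. Then ≺ is noetherian: every increasing sequence L₀ ⊆ L₁ ⊆ L₂ ⊆ … of lead monomial sets (each Lᵢ of the form L(G) for a finite set G of polynomials or L(I) for an ideal I) becomes stationary. -/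
open MvPolynomial

/-- The lead monomial set `L(G) = { LM(x^α g) | α ∈ ℕ^n, g ∈ G, g ≠ 0 }` of a set of
polynomials. -/
noncomputable def leadSetG {n : ℕ} {K : Type*} [CommRing K]
    (ord : LinearOrder (Fin n →₀ ℕ)) (G : Set (MvPolynomial (Fin n) K)) :
    Set (Fin n →₀ ℕ) :=
  {μ | ∃ α : Fin n →₀ ℕ, ∃ g ∈ G, g ≠ 0 ∧
    μ = leadMonomial ord (monomial α (1 : K) * g)}

/-- The lead monomial set `L(I) = { LM(g) | 0 ≠ g ∈ I }` of an ideal. -/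
noncomputable def leadSetI {n : ℕ} {K : Type*} [CommRing K]
    (ord : LinearOrder (Fin n →₀ ℕ)) (I : Ideal (MvPolynomial (Fin n) K)) :
    Set (Fin n →₀ ℕ) :=
  {μ | ∃ g ∈ I, g ≠ 0 ∧ μ = leadMonomial ord g}

section NW

variable {n : ℕ} (L : Finset ((Fin n → ℝ) →ₗ[ℝ] ℝ)) (hL : L.Nonempty) (δ : Fin n → ℝ)

lemma nw_le {l : (Fin n → ℝ) →ₗ[ℝ] ℝ} (hl : l ∈ L) (μ : Fin n →₀ ℕ) :
    newtonWeight L hL δ μ ≤ l ((fun i => (μ i : ℝ)) + δ) := by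
  unfold newtonWeight
  exact Finset.inf'_le _ hl

lemma nw_arg (μ γ : Fin n →₀ ℕ) :
    ((fun i => ((μ + γ) i : ℝ)) + δ) =
      ((fun i => (μ i : ℝ)) + δ) + ((fun i => (γ i : ℝ)) + 0) := by
  funext i
  simp only [Pi.add_apply, Finsupp.add_apply, Pi.zero_apply]
  push_cast
  ring

lemma nw_superadd (μ γ : Fin n →₀ ℕ) :
    newtonWeight L hL δ μ + newtonWeight L hL 0 γ ≤ newtonWeight L hL δ (μ + γ) := by
  have h : ∀ l ∈ L, newtonWeight L hL δ μ + newtonWeight L hL 0 γ ≤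
      l ((fun i => ((μ + γ) i : ℝ)) + δ) := by
    intro l hl
    have h1 := nw_le L hL δ hl μ
    have h2 := nw_le L hL 0 hl γ
    rw [nw_arg, map_add]
    exact add_le_add h1 h2
  unfold newtonWeight
  exact Finset.le_inf' hL _ h

lemma nw_tight {l : (Fin n → ℝ) →ₗ[ℝ] ℝ} (hl : l ∈ L) (μ γ : Fin n →₀ ℕ)
    (h1 : l ((fun i => (μ i : ℝ)) + δ) = newtonWeight L hL δ μ)
    (h2 : ∀ l' ∈ L, l ((fun i => (γ i : ℝ)) + 0) ≤ l' ((fun i => (γ i : ℝ)) + 0)) :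
    newtonWeight L hL δ (μ + γ) = newtonWeight L hL δ μ + newtonWeight L hL 0 γ := by
  have h0 : newtonWeight L hL 0 γ = l ((fun i => (γ i : ℝ)) + 0) := by
    refine le_antisymm (nw_le L hL 0 hl γ) ?_
    unfold newtonWeight
    exact Finset.le_inf' hL _ h2
  refine le_antisymm ?_ (nw_superadd L hL δ μ γ)
  have h3 := nw_le L hL δ hl (μ + γ)
  rw [nw_arg, map_add, h1, ← h0] at h3
  exact h3

lemma ord_step (ord₀ ord : LinearOrder (Fin n →₀ ℕ))
    (hsg : ∀ a b c : Fin n →₀ ℕ, ord₀.lt a b → ord₀.lt (a + c) (b + c))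
    (hord : ∀ a b : Fin n →₀ ℕ, ord.lt a b ↔
      (newtonWeight L hL δ b < newtonWeight L hL δ a ∨
        (newtonWeight L hL δ a = newtonWeight L hL δ b ∧ ord₀.lt a b)))
    (b γ : Fin n →₀ ℕ)
    (htight : newtonWeight L hL δ (b + γ) =
      newtonWeight L hL δ b + newtonWeight L hL 0 γ)
    (a : Fin n →₀ ℕ) (h : ord.lt a b) : ord.lt (a + γ) (b + γ) := by
  rw [hord] at h ⊢
  have hsup := nw_superadd L hL δ a γ
  rcases h with h | ⟨heq, h0⟩
  · left; linarith
  · have hle : newtonWeight L hL δ (b + γ) ≤ newtonWeight L hL δ (a + γ) := by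
      rw [htight, ← heq]; exact hsup
    rcases lt_or_eq_of_le hle with h' | h'
    · left; exact h'
    · right; exact ⟨h'.symm, hsg a b γ h0⟩

end NW

open scoped Pointwise in
lemma leadMonomial_shift {n : ℕ} {K : Type*} [Field K]
    (ord : LinearOrder (Fin n →₀ ℕ)) (f : MvPolynomial (Fin n) K) (hf : f ≠ 0)
    (γ : Fin n →₀ ℕ)
    (hstep : ∀ a, ord.lt a (leadMonomial ord f) →
      ord.lt (a + γ) (leadMonomial ord f + γ)) :
    leadMonomial ord (monomial γ (1 : K) * f) = leadMonomial ord f + γ := by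
  classical
  have hsupp : f.support.Nonempty := support_nonempty.2 hf
  set b := leadMonomial ord f with hbdef'
  have hbdef : b = @Finset.max' _ ord f.support hsupp := by
    rw [hbdef', leadMonomial, dif_pos hsupp]
  have hbmem : b ∈ f.support := by
    rw [hbdef]; exact @Finset.max'_mem _ ord f.support hsupp
  have hcoeff : coeff (γ + b) (monomial γ (1 : K) * f) = coeff b f := by
    rw [coeff_monomial_mul, one_mul]
  have hmem : γ + b ∈ (monomial γ (1 : K) * f).support := by
    rw [mem_support_iff, hcoeff]
    exact mem_support_iff.1 hbmem
  have hne : (monomial γ (1 : K) * f).support.Nonempty := ⟨_, hmem⟩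
  have hbound : ∀ s ∈ (monomial γ (1 : K) * f).support, ord.le s (γ + b) := by
    intro s hs
    have hsub := MvPolynomial.support_mul _ _ hs
    rw [support_monomial, if_neg (one_ne_zero (α := K))] at hsub
    obtain ⟨u, hu, t, ht, rfl⟩ := Finset.mem_add.1 hsub
    rw [Finset.mem_singleton] at hu
    rw [hu]
    have htb : ord.le t b := by
      rw [hbdef]; exact @Finset.le_max' _ ord f.support t ht
    by_cases hteq : t = b
    · subst hteq; exact ord.le_refl _
    · have hlt : ord.lt t b := @lt_of_le_of_ne _ ord.toPartialOrder _ _ htb hteq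
      have h2 := hstep t hlt
      have h3 : ord.le (t + γ) (b + γ) := @le_of_lt _ ord.toPreorder _ _ h2
      rw [add_comm γ t, add_comm γ b]
      exact h3
  have hmax : @Finset.max' _ ord (monomial γ (1 : K) * f).support hne = γ + b :=
    @le_antisymm _ ord.toPartialOrder _ _
      (@Finset.max'_le _ ord _ hne _ hbound) (@Finset.le_max' _ ord _ _ hmem)
  rw [leadMonomial, dif_pos hne, hmax, add_comm]

lemma leadSet_closed {n : ℕ} {K : Type*} [Field K]
    (ord : LinearOrder (Fin n →₀ ℕ)) (T : Set (Fin n →₀ ℕ))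
    (hform : (∃ G : Set (MvPolynomial (Fin n) K), G.Finite ∧ T = leadSetG ord G) ∨
      (∃ I : Ideal (MvPolynomial (Fin n) K), T = leadSetI ord I))
    (μ γ : Fin n →₀ ℕ) (hμ : μ ∈ T)
    (hstep : ∀ a, ord.lt a μ → ord.lt (a + γ) (μ + γ)) :
    μ + γ ∈ T := by
  rcases hform with ⟨G, -, rfl⟩ | ⟨I, rfl⟩
  · obtain ⟨α, g, hgG, hg0, hμeq⟩ := hμ
    have hf0 : monomial α (1 : K) * g ≠ 0 :=
      mul_ne_zero (by simp [monomial_eq_zero]) hg0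
    have hsh := leadMonomial_shift ord (monomial α (1 : K) * g) hf0 γ
      (by intro a ha; rw [← hμeq] at ha ⊢; exact hstep a ha)
    rw [← mul_assoc, monomial_mul, one_mul] at hsh
    exact ⟨γ + α, g, hgG, hg0, by rw [hμeq]; exact hsh.symm⟩
  · obtain ⟨g, hgI, hg0, hμeq⟩ := hμ
    have hsh := leadMonomial_shift ord g hg0 γ
      (by intro a ha; rw [← hμeq] at ha ⊢; exact hstep a ha)
    exact ⟨monomial γ (1 : K) * g, Ideal.mul_mem_left I _ hgI,
      mul_ne_zero (by simp [monomial_eq_zero]) hg0, by rw [hμeq]; exact hsh.symm⟩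

instance : IsWellOrder ℕ (· < ·) := inferInstance

/-- a Newton ordering (for rational `L` and `δ ∈ (ℚ≥0)^n`) is
noetherian: every increasing sequence of lead monomial sets becomes stationary. -/
theorem newton_ordering_noetherian {n : ℕ} {K : Type*} [Field K]
    (L : Finset ((Fin n → ℝ) →ₗ[ℝ] ℝ)) (hL : L.Nonempty)
    (hrat : ∀ l ∈ L, ∀ i : Fin n, ∃ q : ℚ, l (Pi.single i 1) = (q : ℝ))
    (δ : Fin n → ℚ) (hδ : ∀ i, 0 ≤ δ i)
    (ord₀ ord : LinearOrder (Fin n →₀ ℕ))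
    (hsg : ∀ a b c : Fin n →₀ ℕ, ord₀.lt a b → ord₀.lt (a + c) (b + c))
    (hord : ∀ a b : Fin n →₀ ℕ, ord.lt a b ↔
      (newtonWeight L hL (fun i => (δ i : ℝ)) b <
          newtonWeight L hL (fun i => (δ i : ℝ)) a ∨
        (newtonWeight L hL (fun i => (δ i : ℝ)) a =
            newtonWeight L hL (fun i => (δ i : ℝ)) b ∧ ord₀.lt a b)))
    (S : ℕ → Set (Fin n →₀ ℕ)) (hmono : Monotone S)
    (hform : ∀ i : ℕ,
      (∃ G : Set (MvPolynomial (Fin n) K), G.Finite ∧ S i = leadSetG ord G) ∨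
      (∃ I : Ideal (MvPolynomial (Fin n) K), S i = leadSetI ord I)) :
    ∃ N : ℕ, ∀ m : ℕ, N ≤ m → S m = S N := by
  classical
  by_contra hcon
  push_neg at hcon
  obtain ⟨F, hF⟩ := Classical.axiomOfChoice hcon
  have hF1 : ∀ N, N ≤ F N := fun N => (hF N).1
  have hF2 : ∀ N, S (F N) ≠ S N := fun N => (hF N).2
  set δℝ : Fin n → ℝ := fun i => ((δ i : ℚ) : ℝ) with hδℝ
  -- the sequence of times
  let t : ℕ → ℕ := fun k => Nat.rec 0 (fun _ ih => F ih) k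
  have htsucc : ∀ k, t (k + 1) = F (t k) := fun k => rfl
  have htmono : Monotone t := monotone_nat_of_le_succ fun k => hF1 (t k)
  have hnew : ∀ k, ∃ μ, μ ∈ S (t (k + 1)) ∧ μ ∉ S (t k) := by
    intro k
    by_contra h
    push_neg at h
    exact hF2 (t k) (Set.Subset.antisymm (fun μ hμ => h μ hμ) (hmono (hF1 (t k))))
  choose ν hν1 hν2 using hnew
  -- argmin linear forms
  have hargmin : ∀ k, ∃ l, ∃ _ : l ∈ L,
      newtonWeight L hL δℝ (ν k) = l ((fun i => ((ν k) i : ℝ)) + δℝ) := by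
    intro k
    obtain ⟨l, hl, he⟩ := Finset.exists_mem_eq_inf' hL
      (fun l => l ((fun i => ((ν k) i : ℝ)) + δℝ))
    exact ⟨l, hl, he⟩
  choose ℓ hℓmem hℓeq using hargmin
  -- rational coefficients of the linear forms
  have hq' : ∀ l : ((Fin n → ℝ) →ₗ[ℝ] ℝ), ∃ q : Fin n → ℚ,
      l ∈ L → ∀ i, l (Pi.single i 1) = (q i : ℝ) := by
    intro l
    by_cases h : l ∈ L
    · choose q hq using hrat l h
      exact ⟨q, fun _ => hq⟩
    · exact ⟨0, fun h' => absurd h' h⟩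
  choose q hq using hq'
  -- evaluation of linear forms on rational vectors
  have hev : ∀ l ∈ L, ∀ x : Fin n → ℚ,
      l (fun i => (x i : ℝ)) = ((∑ i, x i * q l i : ℚ) : ℝ) := by
    intro l hl x
    rw [LinearMap.pi_apply_eq_sum_univ l]
    push_cast
    refine Finset.sum_congr rfl fun i _ => ?_
    rw [smul_eq_mul]
    congr 1
    rw [← hq l hl i]
    congr 1
    funext j
    simp [Pi.single_apply, eq_comm]
  -- rational values
  set Qf : ((Fin n → ℝ) →ₗ[ℝ] ℝ) → (Fin n →₀ ℕ) → ℚ :=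
    fun l μ => ∑ i, ((μ i : ℚ) + δ i) * q l i with hQf
  have hQ : ∀ l ∈ L, ∀ μ : Fin n →₀ ℕ,
      l ((fun i => (μ i : ℝ)) + δℝ) = (Qf l μ : ℝ) := by
    intro l hl μ
    have harg : ((fun i => ((μ i : ℕ) : ℝ)) + δℝ) =
        fun i => (((μ i : ℚ) + δ i : ℚ) : ℝ) := by
      funext i
      simp [hδℝ]
    rw [harg]
    exact hev l hl _
  -- common denominator
  set A : ℕ := ∏ l ∈ L, ∏ i, (q l i).den with hA
  set B : ℕ := ∏ i, (δ i).den with hB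
  set D : ℕ := A * B with hD
  have hApos : 0 < A := Finset.prod_pos fun l _ => Finset.prod_pos fun i _ => (q l i).pos
  have hBpos : 0 < B := Finset.prod_pos fun i _ => (δ i).pos
  have hDpos : 0 < D := Nat.mul_pos hApos hBpos
  set Rset : Subring ℚ := (Int.castRingHom ℚ).range with hRset
  have hAq : ∀ l ∈ L, ∀ i, ((A : ℚ) * q l i) ∈ Rset := by
    intro l hl i
    obtain ⟨c, hc⟩ : (q l i).den ∣ A :=
      dvd_trans (Finset.dvd_prod_of_mem (fun i => (q l i).den) (Finset.mem_univ i))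
        (Finset.dvd_prod_of_mem (fun l => ∏ i, (q l i).den) hl)
    refine ⟨(c : ℤ) * (q l i).num, ?_⟩
    have h1 : ((q l i).den : ℚ) * q l i = ((q l i).num : ℚ) := Rat.den_mul_eq_num _
    have h2 : (A : ℚ) * q l i = (c : ℚ) * (((q l i).den : ℚ) * q l i) := by
      rw [hc]; push_cast; ring
    rw [h2, h1]
    simp only [Int.coe_castRingHom]
    push_cast
    ring
  have hBδ : ∀ i, ((B : ℚ) * δ i) ∈ Rset := by
    intro i
    obtain ⟨c, hc⟩ : (δ i).den ∣ B := Finset.dvd_prod_of_mem _ (Finset.mem_univ i)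
    refine ⟨(c : ℤ) * (δ i).num, ?_⟩
    have h1 : ((δ i).den : ℚ) * δ i = ((δ i).num : ℚ) := Rat.den_mul_eq_num _
    have h2 : (B : ℚ) * δ i = (c : ℚ) * (((δ i).den : ℚ) * δ i) := by
      rw [hc]; push_cast; ring
    rw [h2, h1]
    simp only [Int.coe_castRingHom]
    push_cast
    ring
  have hDQ : ∀ l ∈ L, ∀ μ : Fin n →₀ ℕ, ((D : ℚ) * Qf l μ) ∈ Rset := by
    intro l hl μ
    have hsplit : (D : ℚ) * Qf l μ =
        ∑ i, ((μ i : ℚ) * (B : ℚ) + (B : ℚ) * δ i) * ((A : ℚ) * q l i) := by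
      rw [hQf, Finset.mul_sum]
      refine Finset.sum_congr rfl fun i _ => ?_
      have hDc : (D : ℚ) = (A : ℚ) * (B : ℚ) := by rw [hD]; push_cast; ring
      rw [hDc]; ring
    rw [hsplit]
    refine Subring.sum_mem _ fun i _ => ?_
    exact Subring.mul_mem _
      (Subring.add_mem _
        (Subring.mul_mem _ (natCast_mem Rset (μ i)) (natCast_mem Rset B)) (hBδ i))
      (hAq l hl i)
  -- value functions
  set V : {x // x ∈ L} → ℕ → ℚ :=
    fun l' k => (D : ℚ) * (Qf l'.1 (ν k) - Qf (ℓ k) (ν k)) with hV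
  have hVmem : ∀ l' k, V l' k ∈ Rset := by
    intro l' k
    have hsplit : V l' k = (D : ℚ) * Qf l'.1 (ν k) - (D : ℚ) * Qf (ℓ k) (ν k) := by
      rw [hV]; ring
    rw [hsplit]
    exact Subring.sub_mem _ (hDQ _ l'.2 _) (hDQ _ (hℓmem k) _)
  have hVnonneg : ∀ l' k, 0 ≤ V l' k := by
    intro l' k
    have h1 : newtonWeight L hL δℝ (ν k) ≤ l'.1 ((fun i => ((ν k) i : ℝ)) + δℝ) :=
      nw_le L hL δℝ l'.2 (ν k)
    rw [hℓeq k, hQ _ (hℓmem k), hQ _ l'.2] at h1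
    have h2 : Qf (ℓ k) (ν k) ≤ Qf l'.1 (ν k) := by exact_mod_cast h1
    have h3 : (0 : ℚ) ≤ (D : ℚ) := by positivity
    rw [hV]
    exact mul_nonneg h3 (sub_nonneg.2 h2)
  -- Dickson's lemma
  set E := Fintype.equivFin {x // x ∈ L} with hE
  set card := Fintype.card {x // x ∈ L} with hcard
  set Φ : ℕ → ((Fin 2) ⊕ ((Fin n) ⊕ {x // x ∈ L})) → ℕ := fun k => Sum.elim
      (fun j => ![(E ⟨ℓ k, hℓmem k⟩).val, card - (E ⟨ℓ k, hℓmem k⟩).val] j)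
      (Sum.elim (fun i => ν k i) (fun l' => (V l' k).num.toNat)) with hΦ
  obtain ⟨j, k, hjk, hle⟩ :=
    (wellQuasiOrdered_le (α := ((Fin 2) ⊕ ((Fin n) ⊕ {x // x ∈ L})) → ℕ))
      Φ
  -- same argmin form
  have hEeq : ℓ j = ℓ k := by
    have h0 := hle (Sum.inl 0)
    have h1 := hle (Sum.inl 1)
    simp only [hΦ, Sum.elim_inl, Matrix.cons_val_zero, Matrix.cons_val_one,
      Matrix.head_cons] at h0 h1
    have hltj : (E ⟨ℓ j, hℓmem j⟩).val < card := (E ⟨ℓ j, hℓmem j⟩).isLt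
    have hltk : (E ⟨ℓ k, hℓmem k⟩).val < card := (E ⟨ℓ k, hℓmem k⟩).isLt
    have heq : E ⟨ℓ j, hℓmem j⟩ = E ⟨ℓ k, hℓmem k⟩ := Fin.ext (by omega)
    have := E.injective heq
    exact Subtype.ext_iff.1 this
  have hνle : ∀ i, ν j i ≤ ν k i := by
    intro i
    have := hle (Sum.inr (Sum.inl i))
    simpa [hΦ] using this
  have hVle : ∀ l' : {x // x ∈ L}, (V l' j).num.toNat ≤ (V l' k).num.toNat := by
    intro l'
    have := hle (Sum.inr (Sum.inr l'))
    simpa [hΦ] using this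
  have hVQ : ∀ l' : {x // x ∈ L}, V l' j ≤ V l' k := by
    intro l'
    obtain ⟨zj, hzj⟩ := hVmem l' j
    obtain ⟨zk, hzk⟩ := hVmem l' k
    simp only [Int.coe_castRingHom] at hzj hzk
    have h := hVle l'
    rw [← hzj, ← hzk]
    rw [← hzj, ← hzk] at h
    simp only [Rat.num_intCast] at h
    have h0j : (0 : ℚ) ≤ (zj : ℚ) := hzj ▸ hVnonneg l' j
    have h0k : (0 : ℚ) ≤ (zk : ℚ) := hzk ▸ hVnonneg l' k
    have h0j' : (0 : ℤ) ≤ zj := by exact_mod_cast h0j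
    have h0k' : (0 : ℤ) ≤ zk := by exact_mod_cast h0k
    have : zj ≤ zk := by omega
    exact_mod_cast this
  -- the difference γ
  have hνleF : ν j ≤ ν k := Finsupp.le_def.2 hνle
  set γ : Fin n →₀ ℕ := ν k - ν j with hγdef
  have hγ : ν j + γ = ν k := add_tsub_cancel_of_le hνleF
  have hvecγ : ((fun i => (γ i : ℝ)) + (0 : Fin n → ℝ)) =
      ((fun i => ((ν k) i : ℝ)) + δℝ) - ((fun i => ((ν j) i : ℝ)) + δℝ) := by
    funext i
    simp only [Pi.add_apply, Pi.sub_apply, Pi.zero_apply, hγdef, Finsupp.tsub_apply]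
    rw [Nat.cast_sub (hνle i)]
    ring
  have hγeval : ∀ l' ∈ L, l' ((fun i => (γ i : ℝ)) + 0) =
      ((Qf l' (ν k) - Qf l' (ν j) : ℚ) : ℝ) := by
    intro l' hl'
    rw [hvecγ, map_sub, hQ _ hl', hQ _ hl']
    push_cast
    ring
  have hlmin : ∀ l' ∈ L, (ℓ j) ((fun i => (γ i : ℝ)) + 0) ≤ l' ((fun i => (γ i : ℝ)) + 0) := by
    intro l' hl'
    rw [hγeval _ (hℓmem j), hγeval _ hl']
    have hv := hVQ ⟨l', hl'⟩
    rw [hV] at hv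
    simp only [hEeq] at hv ⊢
    have hD' : (0 : ℚ) < (D : ℚ) := by exact_mod_cast hDpos
    have h5 : Qf l' (ν j) - Qf (ℓ k) (ν j) ≤ Qf l' (ν k) - Qf (ℓ k) (ν k) :=
      (mul_le_mul_iff_right₀ hD').1 hv
    have h6 : Qf (ℓ k) (ν k) - Qf (ℓ k) (ν j) ≤ Qf l' (ν k) - Qf l' (ν j) := by linarith
    exact_mod_cast h6
  -- tightness
  have htight : newtonWeight L hL δℝ (ν j + γ) =
      newtonWeight L hL δℝ (ν j) + newtonWeight L hL 0 γ :=
    nw_tight L hL δℝ (hℓmem j) (ν j) γ (hℓeq j).symm hlmin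
  have hstepfull : ∀ a, ord.lt a (ν j) → ord.lt (a + γ) (ν j + γ) :=
    ord_step L hL δℝ ord₀ ord hsg hord (ν j) γ htight
  -- closure under the step
  have hνjS : ν j ∈ S (t k) := hmono (htmono (Nat.succ_le_of_lt hjk)) (hν1 j)
  have hfin : ν j + γ ∈ S (t k) :=
    leadSet_closed ord (S (t k)) (hform (t k)) (ν j) γ hνjS hstepfull
  rw [hγ] at hfin
  exact hν2 k hfin
end

section
/- Let ≺ be a noetherian total order on monomials of K[x₁,…,xₙ]. Then every ideal I ⊆ K[x] has a (possibly infinite, but in fact finite) standard basis: a finite set G ⊆ Ī with L(G) = L(I), where Ī = (S⁻¹I) ∩ K[x] and S = { g | LM(g) = 1 }. -/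
/-!
Among the lead sets `L(G)` of finite `G ⊆ I`, ordered by inclusion, the noetherian
hypothesis gives a maximal one. If some `0 ≠ g ∈ I` had `LM(g) ∉ L(G)`, then `L(G ∪ {g})`
would be strictly larger; hence `L(G) = L(I)`. Since `G ⊆ I`, the saturation condition
holds with `s = 1`.
-/

open MvPolynomial

section LeadSets

variable {n : ℕ} {K : Type*} [CommRing K] (ord : LinearOrder (Fin n →₀ ℕ))

theorem leadMonomial_one [Nontrivial K] :
    leadMonomial ord (1 : MvPolynomial (Fin n) K) = 0 := by
  let _ := ord
  simp [leadMonomial, support_one]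

variable {ord}

theorem leadSetG_mono {G G' : Set (MvPolynomial (Fin n) K)} (h : G ⊆ G') :
    leadSetG ord G ⊆ leadSetG ord G' := by
  rintro μ ⟨α, g, hg, hg0, rfl⟩
  exact ⟨α, g, h hg, hg0, rfl⟩

theorem leadMonomial_mem_leadSetG {G : Set (MvPolynomial (Fin n) K)}
    {g : MvPolynomial (Fin n) K} (hg : g ∈ G) (hg0 : g ≠ 0) :
    leadMonomial ord g ∈ leadSetG ord G :=
  ⟨0, g, hg, hg0, by rw [monomial_zero', C_1, one_mul]⟩

theorem leadSetG_subset_leadSetI {G : Set (MvPolynomial (Fin n) K)}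
    {I : Ideal (MvPolynomial (Fin n) K)} (hG : G ⊆ I) :
    leadSetG ord G ⊆ leadSetI ord I := by
  rintro μ ⟨α, g, hg, hg0, rfl⟩
  refine ⟨_, I.mul_mem_left _ (hG hg), ?_, rfl⟩
  rwa [Ne, isRegular_one.monomial.left.mul_left_eq_zero_iff]

variable (ord K) in
abbrev FGLeadSet :=
  {S : Set (Fin n →₀ ℕ) //
    ∃ G : Set (MvPolynomial (Fin n) K), G.Finite ∧ S = leadSetG ord G}

theorem wellFoundedGT_fgLeadSet
    (hacc : ∀ S : ℕ → Set (Fin n →₀ ℕ), Monotone S →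
      (∀ i, ∃ G : Set (MvPolynomial (Fin n) K), G.Finite ∧ S i = leadSetG ord G) →
      ∃ N, ∀ m, N ≤ m → S m = S N) :
    WellFoundedGT (FGLeadSet K ord) := by
  refine wellFoundedGT_iff_monotone_chain_condition.2 fun S => ?_
  obtain ⟨N, hN⟩ := hacc (fun i => (S i).1) S.monotone fun i => (S i).2
  exact ⟨N, fun m hm => Subtype.ext (hN m hm).symm⟩

theorem exists_finite_subset_leadSetG_eq_leadSetI [WellFoundedGT (FGLeadSet K ord)]
    (I : Ideal (MvPolynomial (Fin n) K)) :
    ∃ G : Set (MvPolynomial (Fin n) K),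
      G.Finite ∧ G ⊆ I ∧ leadSetG ord G = leadSetI ord I := by
  obtain ⟨⟨_, _⟩, ⟨G, hGfin, hGI, rfl⟩, hmax⟩ :=
    exists_maximal_of_wellFoundedGT
      (fun S : FGLeadSet K ord =>
        ∃ G : Set (MvPolynomial (Fin n) K), G.Finite ∧ G ⊆ I ∧ S.1 = leadSetG ord G)
      ⟨⟨_, ∅, Set.finite_empty, rfl⟩, ∅, Set.finite_empty, Set.empty_subset _, rfl⟩
  refine ⟨G, hGfin, hGI, (leadSetG_subset_leadSetI hGI).antisymm ?_⟩
  rintro _ ⟨g, hgI, hg0, rfl⟩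
  have hle : leadSetG ord (insert g G) ⊆ leadSetG ord G :=
    @hmax ⟨_, insert g G, hGfin.insert g, rfl⟩
      ⟨insert g G, hGfin.insert g, Set.insert_subset hgI hGI, rfl⟩
      (leadSetG_mono (Set.subset_insert g G))
  exact hle (leadMonomial_mem_leadSetG (Set.mem_insert g G) hg0)

end LeadSets

theorem exists_standard_basis_of_noetherian_general {n : ℕ} {K : Type*} [Field K]
    (ord : LinearOrder (Fin n →₀ ℕ))
    (hnoeth : ∀ (S : ℕ → Set (Fin n →₀ ℕ)), Monotone S →
      (∀ i : ℕ,
        (∃ G : Set (MvPolynomial (Fin n) K), G.Finite ∧ S i = leadSetG ord G) ∨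
        (∃ J : Ideal (MvPolynomial (Fin n) K), S i = leadSetI ord J)) →
      ∃ N : ℕ, ∀ m : ℕ, N ≤ m → S m = S N)
    (I : Ideal (MvPolynomial (Fin n) K)) :
    ∃ G : Set (MvPolynomial (Fin n) K), G.Finite ∧
      (∀ f ∈ G, ∃ s : MvPolynomial (Fin n) K,
        s ≠ 0 ∧ leadMonomial ord s = 0 ∧ s * f ∈ I) ∧
      leadSetG ord G = leadSetI ord I := by
  have := wellFoundedGT_fgLeadSet fun S hS hfin => hnoeth S hS fun i => .inl (hfin i)
  obtain ⟨G, hGfin, hGI, hG⟩ := exists_finite_subset_leadSetG_eq_leadSetI (ord := ord) I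
  refine ⟨G, hGfin, fun f hf => ⟨1, one_ne_zero, leadMonomial_one ord, ?_⟩, hG⟩
  rw [one_mul]; exact hGI hf

/-- for a normal noetherian order, every ideal `I` has a finite
standard basis: a finite `G ⊆ Ī` with `L(G) = L(I)`, where
`Ī = S⁻¹I ∩ K[x] = { f | ∃ s with LM(s) = 1, s·f ∈ I }`. -/
theorem exists_standard_basis_of_noetherian {n : ℕ} {K : Type*} [Field K]
    (ord : LinearOrder (Fin n →₀ ℕ))
    (hnormal : ∀ (f : MvPolynomial (Fin n) K), f ≠ 0 → ∀ α : Fin n →₀ ℕ,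
      ord.lt α 0 → ord.lt (leadMonomial ord (monomial α (1 : K) * f))
        (leadMonomial ord f))
    (hnoeth : ∀ (S : ℕ → Set (Fin n →₀ ℕ)), Monotone S →
      (∀ i : ℕ,
        (∃ G : Set (MvPolynomial (Fin n) K), G.Finite ∧ S i = leadSetG ord G) ∨
        (∃ J : Ideal (MvPolynomial (Fin n) K), S i = leadSetI ord J)) →
      ∃ N : ℕ, ∀ m : ℕ, N ≤ m → S m = S N)
    (I : Ideal (MvPolynomial (Fin n) K)) :
    ∃ G : Set (MvPolynomial (Fin n) K), G.Finite ∧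
      (∀ f ∈ G, ∃ s : MvPolynomial (Fin n) K,
        s ≠ 0 ∧ leadMonomial ord s = 0 ∧ s * f ∈ I) ∧
      leadSetG ord G = leadSetI ord I :=
  exists_standard_basis_of_noetherian_general ord hnoeth I
end

section
/- Let I ⊆ K[x₁,…,xₙ] be a zero-dimensional ideal and ≺ a normal local order on monomials. If (x₁,…,xₙ)^m ⊆ I_{(x)}, then the set L(I) \ { monomials of degree ≥ m } is finite, and choosing f₁,…,f_k ∈ Ī with LM(fᵢ) equal to these finitely many monomials, the set {f₁,…,f_k} together with all monomials of degree m is a standard basis of I. -/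
open MvPolynomial

namespace SBaux

variable {n : ℕ} {K : Type*} [Field K] (ord : LinearOrder (Fin n →₀ ℕ))

theorem lm_def {f : MvPolynomial (Fin n) K} (h : f.support.Nonempty) :
    leadMonomial ord f = @Finset.max' _ ord f.support h := by
  simp only [leadMonomial, dif_pos h]

theorem lm_mem {f : MvPolynomial (Fin n) K} (hf : f ≠ 0) :
    leadMonomial ord f ∈ f.support := by
  have h : f.support.Nonempty := MvPolynomial.support_nonempty.mpr hf
  rw [lm_def ord h]
  exact Finset.max'_mem _ _

theorem le_lm {f : MvPolynomial (Fin n) K} {β : Fin n →₀ ℕ} (hβ : β ∈ f.support) :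
    ord.le β (leadMonomial ord f) := by
  have h : f.support.Nonempty := ⟨β, hβ⟩
  rw [lm_def ord h]
  exact @Finset.le_max' _ ord f.support β hβ

theorem lm_eq_of {f : MvPolynomial (Fin n) K} {μ : Fin n →₀ ℕ}
    (h1 : μ ∈ f.support) (h2 : ∀ β ∈ f.support, ord.le β μ) :
    leadMonomial ord f = μ := by
  have h : f.support.Nonempty := ⟨μ, h1⟩
  rw [lm_def ord h]
  exact ord.le_antisymm _ _ (@Finset.max'_le _ ord f.support h μ h2)
    (@Finset.le_max' _ ord f.support μ h1)

theorem lm_monomial {μ : Fin n →₀ ℕ} {c : K} (hc : c ≠ 0) :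
    leadMonomial ord (monomial μ c) = μ := by
  classical
  have hs : (monomial μ c).support = {μ} := by
    rw [MvPolynomial.support_monomial, if_neg hc]
  refine @lm_eq_of _ _ _ ord _ μ (by rw [hs]; exact Finset.mem_singleton_self μ) ?_
  intro β hβ
  rw [hs, Finset.mem_singleton] at hβ
  subst hβ
  exact ord.le_refl _

theorem shift_mem {a b : Fin n →₀ ℕ} {f : MvPolynomial (Fin n) K}
    (hb : b ∈ f.support) : a + b ∈ (monomial a (1 : K) * f).support := by
  rw [MvPolynomial.mem_support_iff] at hb ⊢
  rw [MvPolynomial.coeff_monomial_mul, one_mul]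
  exact hb

theorem lm_mul_of_lm_zero
    (hnormal : ∀ (f : MvPolynomial (Fin n) K), f ≠ 0 → ∀ α : Fin n →₀ ℕ,
      ord.lt α 0 → ord.lt (leadMonomial ord (monomial α (1 : K) * f))
        (leadMonomial ord f))
    {s f : MvPolynomial (Fin n) K} (hs : s ≠ 0)
    (hs0 : leadMonomial ord s = 0) (hf : f ≠ 0) :
    leadMonomial ord (s * f) = leadMonomial ord f := by
  classical
  set μ := leadMonomial ord f with hμ
  have key : ∀ a ∈ s.support, ∀ b ∈ f.support, a ≠ 0 → ord.lt (a + b) μ := by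
    intro a ha b hb ha0
    have hale : ord.le a 0 := by
      have := le_lm ord ha; rwa [hs0] at this
    have halt : ord.lt a 0 := (ord.lt_iff_le_not_ge a 0).mpr
      ⟨hale, fun h => ha0 (ord.le_antisymm _ _ hale h)⟩
    have h1 : a + b ∈ (monomial a (1 : K) * f).support := shift_mem hb
    exact @lt_of_le_of_lt _ ord.toPreorder _ _ _ (le_lm ord h1) (hnormal f hf a halt)
  have hc0 : MvPolynomial.coeff 0 s ≠ 0 := by
    have := lm_mem ord hs
    rw [hs0] at this
    exact MvPolynomial.mem_support_iff.mp this
  have hcf : MvPolynomial.coeff μ f ≠ 0 :=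
    MvPolynomial.mem_support_iff.mp (lm_mem ord hf)
  have hco : MvPolynomial.coeff μ (s * f) =
      MvPolynomial.coeff 0 s * MvPolynomial.coeff μ f := by
    rw [MvPolynomial.coeff_mul]
    apply Finset.sum_eq_single ((0 : Fin n →₀ ℕ), μ)
    · rintro ⟨a, b⟩ hab hne
      rw [Finset.HasAntidiagonal.mem_antidiagonal] at hab
      dsimp only at hab ⊢
      by_contra hc
      have ha : a ∈ s.support := MvPolynomial.mem_support_iff.mpr (left_ne_zero_of_mul hc)
      have hb : b ∈ f.support := MvPolynomial.mem_support_iff.mpr (right_ne_zero_of_mul hc)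
      rcases eq_or_ne a 0 with rfl | ha0
      · rw [zero_add] at hab
        exact hne (by rw [hab])
      · have hk := key a ha b hb ha0
        rw [hab] at hk
        exact absurd hk (@lt_irrefl _ ord.toPreorder μ)
    · intro h
      exact absurd (Finset.HasAntidiagonal.mem_antidiagonal.mpr (zero_add μ)) h
  apply lm_eq_of ord
  · rw [MvPolynomial.mem_support_iff, hco]
    exact mul_ne_zero hc0 hcf
  · intro γ hγ
    rw [MvPolynomial.mem_support_iff, MvPolynomial.coeff_mul] at hγ
    obtain ⟨⟨a, b⟩, hab, hne⟩ := Finset.exists_ne_zero_of_sum_ne_zero hγ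
    rw [Finset.HasAntidiagonal.mem_antidiagonal] at hab
    dsimp only at hab hne
    have ha : a ∈ s.support := MvPolynomial.mem_support_iff.mpr (left_ne_zero_of_mul hne)
    have hb : b ∈ f.support := MvPolynomial.mem_support_iff.mpr (right_ne_zero_of_mul hne)
    rcases eq_or_ne a 0 with rfl | ha0
    · rw [zero_add] at hab
      subst hab
      exact le_lm ord hb
    · have hk := key a ha b hb ha0
      rw [hab] at hk
      exact @le_of_lt _ ord.toPreorder _ _ hk

theorem apply_le_sum (μ : Fin n →₀ ℕ) (i : Fin n) :
    μ i ≤ μ.sum fun _ e => e := by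
  rcases eq_or_ne (μ i) 0 with h | h
  · rw [h]; exact Nat.zero_le _
  · rw [Finsupp.sum]
    exact Finset.single_le_sum (f := fun j => μ j) (fun _ _ => Nat.zero_le _)
      (Finsupp.mem_support_iff.mpr h)

theorem exists_sub {μ : Fin n →₀ ℕ} {m : ℕ} (h : m ≤ μ.sum fun _ e => e) :
    ∃ ν : Fin n →₀ ℕ, ν ≤ μ ∧ (ν.sum fun _ e => e) = m := by
  induction m with
  | zero => exact ⟨0, zero_le, Finsupp.sum_zero_index⟩
  | succ m ih =>
    obtain ⟨ν, hν, hsum⟩ := ih (Nat.le_of_succ_le h)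
    have hne : ν ≠ μ := by
      rintro rfl; omega
    obtain ⟨i, hi⟩ : ∃ i, ν i < μ i := by
      by_contra hc
      push_neg at hc
      exact hne (le_antisymm hν (Finsupp.le_def.mpr hc))
    refine ⟨ν + Finsupp.single i 1, Finsupp.le_def.mpr fun j => ?_, ?_⟩
    · rcases eq_or_ne j i with rfl | hj
      · simp only [Finsupp.add_apply, Finsupp.single_eq_same]
        omega
      · simp only [Finsupp.add_apply, Finsupp.single_eq_of_ne' (Ne.symm hj), add_zero]
        exact Finsupp.le_def.mp hν j
    · rw [Finsupp.sum_add_index' (fun _ => rfl) (fun _ _ _ => rfl),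
        Finsupp.sum_single_index rfl, hsum]

theorem monomial_mem_pow {m : ℕ} :
    ∀ {ν : Fin n →₀ ℕ}, (ν.sum fun _ e => e) = m →
      monomial ν (1 : K) ∈
        (Ideal.span (Set.range (X : Fin n → MvPolynomial (Fin n) K))) ^ m := by
  induction m with
  | zero =>
    intro ν _
    rw [pow_zero, Ideal.one_eq_top]
    exact Submodule.mem_top
  | succ m ih =>
    intro ν hν
    have hne : ν ≠ 0 := by
      rintro rfl
      rw [Finsupp.sum_zero_index] at hν
      omega
    obtain ⟨i, hi⟩ : ∃ i, ν i ≠ 0 := by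
      by_contra hc
      push_neg at hc
      exact hne (Finsupp.ext hc)
    have hle : Finsupp.single i 1 ≤ ν :=
      Finsupp.single_le_iff.mpr (Nat.one_le_iff_ne_zero.mpr hi)
    have hsum' : (ν - Finsupp.single i 1) + Finsupp.single i 1 = ν :=
      tsub_add_cancel_of_le hle
    have hs : ((ν - Finsupp.single i 1).sum fun _ e => e) = m := by
      have h2 : (((ν - Finsupp.single i 1) + Finsupp.single i 1).sum fun _ e => e) =
          ((ν - Finsupp.single i 1).sum fun _ e => e) + 1 := by
        rw [Finsupp.sum_add_index' (fun _ => rfl) (fun _ _ _ => rfl),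
          Finsupp.sum_single_index rfl]
      rw [hsum'] at h2
      omega
    have heq : monomial ν (1 : K) =
        monomial (ν - Finsupp.single i 1) 1 * monomial (Finsupp.single i 1) 1 := by
      rw [MvPolynomial.monomial_mul, one_mul, hsum']
    rw [heq, pow_succ]
    refine Ideal.mul_mem_mul (ih hs) (Ideal.subset_span ⟨i, rfl⟩)

theorem exists_smul_mem (S : Submonoid (MvPolynomial (Fin n) K))
    (I : Ideal (MvPolynomial (Fin n) K)) {g : MvPolynomial (Fin n) K}
    (hg : g ∈ Ideal.comap
      (algebraMap (MvPolynomial (Fin n) K) (Localization S))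
      (Ideal.map (algebraMap (MvPolynomial (Fin n) K) (Localization S)) I)) :
    ∃ s ∈ S, s * g ∈ I := by
  rw [Ideal.mem_comap,
    IsLocalization.mem_map_algebraMap_iff S (Localization S)] at hg
  obtain ⟨⟨a, t⟩, h⟩ := hg
  rw [← map_mul] at h
  obtain ⟨c, hc⟩ := (IsLocalization.eq_iff_exists S (Localization S)).mp h
  refine ⟨(c : MvPolynomial (Fin n) K) * t, S.mul_mem c.2 t.2, ?_⟩
  have : (c : MvPolynomial (Fin n) K) * t * g = c * (g * t) := by ring
  rw [this, hc]
  exact I.mul_mem_left _ a.2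

end SBaux

/-- if `(x₁,…,xₙ)^m ⊆ I_{(x)}` for a zero dimensional ideal `I` and a
normal local order, then `L(I) \ {deg ≥ m}` is finite, and any `F ⊆ Ī` of nonzero
polynomials whose lead monomials are exactly these finitely many monomials, together
with all monomials of degree `m`, is a standard basis of `I`. -/
theorem standard_basis_from_truncation {n : ℕ} {K : Type*} [Field K]
    (ord : LinearOrder (Fin n →₀ ℕ))
    (hnormal : ∀ (f : MvPolynomial (Fin n) K), f ≠ 0 → ∀ α : Fin n →₀ ℕ,
      ord.lt α 0 → ord.lt (leadMonomial ord (monomial α (1 : K) * f))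
        (leadMonomial ord f))
    (hlocal : ∀ i : Fin n, ord.lt (Finsupp.single i 1) 0)
    (I : Ideal (MvPolynomial (Fin n) K))
    (S : Submonoid (MvPolynomial (Fin n) K))
    (hS : ∀ g : MvPolynomial (Fin n) K,
      g ∈ S ↔ (g ≠ 0 ∧ leadMonomial ord g = 0))
    -- `Ī = (I K[x]_{(x)}) ∩ K[x]`, realised as the contraction of the extension of
    -- `I` to the localization at `S = {g | LM(g) = 1}`:
    (Ibar : Ideal (MvPolynomial (Fin n) K))
    (hIbar : Ibar = Ideal.comap
      (algebraMap (MvPolynomial (Fin n) K) (Localization S))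
      (Ideal.map (algebraMap (MvPolynomial (Fin n) K) (Localization S)) I))
    (m : ℕ)
    (hm : (Ideal.span (Set.range (X : Fin n → MvPolynomial (Fin n) K))) ^ m ≤ Ibar) :
    (leadSetI ord I \ {μ : Fin n →₀ ℕ | m ≤ μ.sum fun _ e => e}).Finite ∧
    ∀ F : Set (MvPolynomial (Fin n) K), F.Finite → (∀ f ∈ F, f ∈ Ibar) →
      (∀ f ∈ F, f ≠ 0) →
      (leadMonomial ord '' F =
        leadSetI ord I \ {μ : Fin n →₀ ℕ | m ≤ μ.sum fun _ e => e}) →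
      leadSetG ord
        (F ∪ {p : MvPolynomial (Fin n) K |
          ∃ μ : Fin n →₀ ℕ, (μ.sum fun _ e => e) = m ∧ p = monomial μ (1 : K)}) =
        leadSetI ord I := by
  have memI : ∀ g : MvPolynomial (Fin n) K, g ∈ Ibar → g ≠ 0 →
      leadMonomial ord g ∈ leadSetI ord I := by
    intro g hg hg0
    rw [hIbar] at hg
    obtain ⟨s, hsS, hsg⟩ := SBaux.exists_smul_mem S I hg
    obtain ⟨hs0, hslm⟩ := (hS s).mp hsS
    exact ⟨s * g, hsg, mul_ne_zero hs0 hg0,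
      (SBaux.lm_mul_of_lm_zero ord hnormal hs0 hslm hg0).symm⟩
  constructor
  · apply Set.Finite.subset
      (Set.finite_Icc (0 : Fin n →₀ ℕ) (Finsupp.equivFunOnFinite.symm fun _ : Fin n => m))
    rintro μ ⟨_, hμm⟩
    simp only [Set.mem_setOf_eq, not_le] at hμm
    refine ⟨zero_le, Finsupp.le_def.mpr fun i => ?_⟩
    have h1 : μ i ≤ μ.sum fun _ e => e := SBaux.apply_le_sum μ i
    have h2 : (Finsupp.equivFunOnFinite.symm fun _ : Fin n => m) i = m := rfl
    omega
  · intro F _ hFIbar hFne hFlm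
    ext μ
    constructor
    · rintro ⟨α, g, hgG, hg0, rfl⟩
      rcases hgG with hgF | ⟨ν, hν, rfl⟩
      · exact memI _ (Ibar.mul_mem_left _ (hFIbar g hgF))
          (mul_ne_zero (fun h => one_ne_zero ((MvPolynomial.monomial_eq_zero).mp h)) hg0)
      · have heq : monomial α (1 : K) * monomial ν 1 = monomial (α + ν) 1 := by
          rw [MvPolynomial.monomial_mul, one_mul]
        have h1 : monomial (α + ν) (1 : K) ∈ Ibar := by
          have h2 : monomial ν (1 : K) ∈ Ibar := hm (SBaux.monomial_mem_pow hν)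
          have h3 := Ibar.mul_mem_left (monomial α (1 : K)) h2
          rwa [heq] at h3
        have h2 : monomial (α + ν) (1 : K) ≠ 0 :=
          fun h => one_ne_zero ((MvPolynomial.monomial_eq_zero).mp h)
        rw [heq]
        exact memI _ h1 h2
    · rintro ⟨g, hgI, hg0, rfl⟩
      by_cases hdeg : m ≤ (leadMonomial ord g).sum fun _ e => e
      · obtain ⟨ν, hνle, hνm⟩ := SBaux.exists_sub hdeg
        refine ⟨leadMonomial ord g - ν, monomial ν 1, Or.inr ⟨ν, hνm, rfl⟩,
          fun h => one_ne_zero ((MvPolynomial.monomial_eq_zero).mp h), ?_⟩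
        rw [MvPolynomial.monomial_mul, one_mul, SBaux.lm_monomial ord one_ne_zero,
          tsub_add_cancel_of_le hνle]
      · have hmem : leadMonomial ord g ∈ leadMonomial ord '' F := by
          rw [hFlm]
          exact ⟨⟨g, hgI, hg0, rfl⟩, hdeg⟩
        obtain ⟨f, hfF, hflm⟩ := hmem
        refine ⟨0, f, Or.inl hfF, hFne f hfF, ?_⟩
        rw [MvPolynomial.monomial_zero', MvPolynomial.C_1, one_mul, hflm]
end

section
/- Let ≺ be a normal local order on monomials of K[x₁,…,xₙ] and I ⊆ K[x] an ideal with Ī = (I K[x]_{(x)}) ∩ K[x]. Then dim_K K[x]/Ī = |{ x^α | x^α ∉ L(I) }| (as cardinals, finite or infinite). -/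
open MvPolynomial

section LO
variable {A : Type*} (o : LinearOrder A) {a b c : A}
theorem LO.lt_trans (h1 : o.lt a b) (h2 : o.lt b c) : o.lt a c :=
  @_root_.lt_trans A o.toPartialOrder.toPreorder a b c h1 h2
theorem LO.le_trans (h1 : o.le a b) (h2 : o.le b c) : o.le a c :=
  @_root_.le_trans A o.toPartialOrder.toPreorder a b c h1 h2
theorem LO.le_of_lt (h1 : o.lt a b) : o.le a b :=
  @_root_.le_of_lt A o.toPartialOrder.toPreorder a b h1
theorem LO.lt_of_lt_of_le (h1 : o.lt a b) (h2 : o.le b c) : o.lt a c :=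
  @_root_.lt_of_lt_of_le A o.toPartialOrder.toPreorder a b c h1 h2
theorem LO.lt_of_le_of_lt (h1 : o.le a b) (h2 : o.lt b c) : o.lt a c :=
  @_root_.lt_of_le_of_lt A o.toPartialOrder.toPreorder a b c h1 h2
theorem LO.lt_irrefl (h : o.lt a a) : False :=
  @_root_.lt_irrefl A o.toPartialOrder.toPreorder a h
theorem LO.ne_of_lt (h : o.lt a b) : a ≠ b :=
  @_root_.ne_of_lt A o.toPartialOrder.toPreorder a b h
theorem LO.lt_of_le_of_ne (h1 : o.le a b) (h2 : a ≠ b) : o.lt a b :=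
  @_root_.lt_of_le_of_ne A o.toPartialOrder a b h1 h2
end LO


section Aux
variable {n : ℕ} {K : Type} [Field K] (ord : LinearOrder (Fin n →₀ ℕ))

theorem lm_mem_support {f : MvPolynomial (Fin n) K} (hf : f ≠ 0) :
    leadMonomial ord f ∈ f.support := by
  unfold leadMonomial
  rw [dif_pos (by simpa using hf)]
  exact Finset.max'_mem _ _

theorem le_lm {f : MvPolynomial (Fin n) K} {γ : Fin n →₀ ℕ} (hγ : γ ∈ f.support) :
    ord.le γ (leadMonomial ord f) := by
  have hf : f.support.Nonempty := ⟨γ, hγ⟩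
  unfold leadMonomial
  rw [dif_pos hf]
  exact @Finset.le_max' _ ord _ _ hγ

theorem lm_eq_of {f : MvPolynomial (Fin n) K} {δ : Fin n →₀ ℕ} (hδ : δ ∈ f.support)
    (hub : ∀ γ ∈ f.support, ord.le γ δ) : leadMonomial ord f = δ := by
  have hf : f.support.Nonempty := ⟨δ, hδ⟩
  unfold leadMonomial
  rw [dif_pos hf]
  exact ord.le_antisymm _ _ (hub _ (Finset.max'_mem _ _)) (@Finset.le_max' _ ord _ _ hδ)

theorem lm_monomial {β : Fin n →₀ ℕ} {c : K} (hc : c ≠ 0) :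
    leadMonomial ord (monomial β c) = β := by
  classical
  apply lm_eq_of
  · simpa [MvPolynomial.support_monomial, hc] using Finset.mem_singleton_self β
  · intro γ hγ
    rw [MvPolynomial.support_monomial, if_neg hc, Finset.mem_singleton] at hγ
    exact hγ ▸ ord.le_refl _

end Aux
theorem deg_finite {n : ℕ} (k : ℕ) : {β : Fin n →₀ ℕ | (∑ i, β i) < k}.Finite := by
  classical
  apply Set.Finite.subset (Set.finite_Iic (Finsupp.equivFunOnFinite.symm (fun _ => k)))
  intro β hβ
  simp only [Set.mem_setOf_eq] at hβ
  intro i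
  calc β i ≤ ∑ j, β j := Finset.single_le_sum (fun j _ => Nat.zero_le _) (Finset.mem_univ i)
  _ ≤ k := hβ.le


section B
variable {n : ℕ} {K : Type} [Field K] (ord : LinearOrder (Fin n →₀ ℕ))
    (hnormal : ∀ (f : MvPolynomial (Fin n) K), f ≠ 0 → ∀ α : Fin n →₀ ℕ,
      ord.lt α 0 → ord.lt (leadMonomial ord (monomial α (1 : K) * f))
        (leadMonomial ord f))
    (hlocal : ∀ i : Fin n, ord.lt (Finsupp.single i 1) 0)

include hnormal hlocal

theorem step_lt (i : Fin n) (β : Fin n →₀ ℕ) :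
    ord.lt (Finsupp.single i 1 + β) β := by
  have h := hnormal (monomial β (1 : K)) (by simp [MvPolynomial.monomial_eq_zero]) _ (hlocal i)
  rwa [MvPolynomial.monomial_mul, mul_one, lm_monomial ord one_ne_zero,
    lm_monomial ord one_ne_zero] at h

theorem single_lt {b : ℕ} (hb : b ≠ 0) (i : Fin n) (β : Fin n →₀ ℕ) :
    ord.lt (Finsupp.single i b + β) β := by
  induction b with
  | zero => exact absurd rfl hb
  | succ m ih =>
    rcases Nat.eq_zero_or_pos m with rfl | hm
    · exact step_lt (K := K) ord hnormal hlocal i β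
    · have : Finsupp.single i (m + 1) + β = Finsupp.single i 1 + (Finsupp.single i m + β) := by
        rw [← add_assoc, ← Finsupp.single_add, add_comm 1 m]
      rw [this]
      exact LO.lt_trans ord (step_lt (K := K) ord hnormal hlocal i _) (ih hm.ne')

theorem shift_le (α β : Fin n →₀ ℕ) : ord.le (α + β) β := by
  induction α using Finsupp.induction generalizing β with
  | zero => simp [ord.le_refl]
  | single_add a b f ha hb ih =>
    rw [add_assoc]
    exact LO.le_trans ord (LO.le_of_lt ord (single_lt (K := K) ord hnormal hlocal hb a _)) (ih β)

theorem shift_lt {α : Fin n →₀ ℕ} (hα : α ≠ 0) (β : Fin n →₀ ℕ) :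
    ord.lt (α + β) β := by
  obtain ⟨i, hi⟩ : ∃ i, α i ≠ 0 := by
    by_contra h
    push_neg at h
    exact hα (Finsupp.ext h)
  have hdec : α = Finsupp.single i (α i) + α.erase i := (Finsupp.single_add_erase i α).symm
  rw [hdec, add_assoc]
  exact LO.lt_of_lt_of_le ord (single_lt (K := K) ord hnormal hlocal hi i _)
    (shift_le (K := K) ord hnormal hlocal _ β)

theorem lt_zero {γ : Fin n →₀ ℕ} (hγ : γ ≠ 0) : ord.lt γ 0 := by
  simpa using shift_lt (K := K) ord hnormal hlocal hγ 0

theorem le_zero (γ : Fin n →₀ ℕ) : ord.le γ 0 := by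
  simpa using shift_le (K := K) ord hnormal hlocal γ 0

theorem lm_mul_unit {s f : MvPolynomial (Fin n) K} (hs : MvPolynomial.coeff 0 s ≠ 0)
    (hf : f ≠ 0) :
    s * f ≠ 0 ∧ leadMonomial ord (s * f) = leadMonomial ord f := by
  classical
  set c := MvPolynomial.coeff 0 s with hc
  set s' := s - C c with hs'
  have hs'0 : MvPolynomial.coeff 0 s' = 0 := by
    simp [hs', hc, MvPolynomial.coeff_sub, MvPolynomial.coeff_zero_C]
  have hsplit : s * f = C c * f + s' * f := by rw [hs']; ring
  have hlt : ∀ γ ∈ (s' * f).support, ord.lt γ (leadMonomial ord f) := by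
    intro γ hγ
    have hrw : s' * f = ∑ v ∈ s'.support, C (MvPolynomial.coeff v s') * (monomial v 1 * f) := by
      conv_lhs => rw [s'.as_sum, Finset.sum_mul]
      refine Finset.sum_congr rfl fun v _ => ?_
      rw [← mul_assoc, C_mul_monomial, mul_one]
    rw [hrw] at hγ
    obtain ⟨v, hv, hγv⟩ := Finset.mem_biUnion.1 (MvPolynomial.support_sum hγ)
    have hv0 : v ≠ 0 := fun h => (by simpa [h] using hv : MvPolynomial.coeff 0 s' ≠ 0) hs'0
    have hmf : monomial v (1 : K) * f ≠ 0 :=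
      mul_ne_zero (by simp [MvPolynomial.monomial_eq_zero]) hf
    have hγ' : γ ∈ (monomial v (1 : K) * f).support := by
      have := MvPolynomial.support_smul (a := MvPolynomial.coeff v s')
        (f := monomial v (1:K) * f)
      rw [MvPolynomial.smul_eq_C_mul] at this
      exact this hγv
    exact LO.lt_of_le_of_lt ord (le_lm ord hγ')
      (hnormal f hf v (lt_zero (K := K) ord hnormal hlocal hv0))
  have hnotmem : leadMonomial ord f ∉ (s' * f).support := fun h =>
    LO.lt_irrefl ord (hlt _ h)
  have hco : MvPolynomial.coeff (leadMonomial ord f) (s * f) ≠ 0 := by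
    rw [hsplit, MvPolynomial.coeff_add, MvPolynomial.coeff_C_mul]
    rw [MvPolynomial.notMem_support_iff] at hnotmem
    rw [hnotmem, add_zero]
    exact mul_ne_zero hs (MvPolynomial.mem_support_iff.1 (lm_mem_support ord hf))
  have hne : s * f ≠ 0 := fun h0 => hco (by simp [h0])
  refine ⟨hne, lm_eq_of ord (MvPolynomial.mem_support_iff.2 hco) ?_⟩
  intro γ hγ
  rw [hsplit] at hγ
  rcases Finset.mem_union.1 (MvPolynomial.support_add hγ) with h | h
  · have : γ ∈ f.support := by
      have := MvPolynomial.support_smul (a := c) (f := f)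
      rw [MvPolynomial.smul_eq_C_mul] at this
      exact this h
    exact le_lm ord this
  · exact LO.le_of_lt ord (hlt _ h)
theorem mem_S_iff {S : Submonoid (MvPolynomial (Fin n) K)}
    (hS : ∀ g : MvPolynomial (Fin n) K, g ∈ S ↔ (g ≠ 0 ∧ leadMonomial ord g = 0))
    (g : MvPolynomial (Fin n) K) : g ∈ S ↔ MvPolynomial.coeff 0 g ≠ 0 := by
  rw [hS]
  constructor
  · rintro ⟨hg0, hlm⟩
    have := lm_mem_support ord hg0
    rw [hlm] at this
    exact MvPolynomial.mem_support_iff.1 this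
  · intro h
    have hg0 : g ≠ 0 := fun h0 => h (by simp [h0])
    refine ⟨hg0, lm_eq_of ord (MvPolynomial.mem_support_iff.2 h) fun γ _ => ?_⟩
    exact le_zero (K := K) ord hnormal hlocal γ

omit hnormal hlocal in
theorem mem_Ibar_iff {S : Submonoid (MvPolynomial (Fin n) K)}
    {I Ibar : Ideal (MvPolynomial (Fin n) K)}
    (hIbar : Ibar = Ideal.comap
      (algebraMap (MvPolynomial (Fin n) K) (Localization S))
      (Ideal.map (algebraMap (MvPolynomial (Fin n) K) (Localization S)) I))
    (f : MvPolynomial (Fin n) K) : f ∈ Ibar ↔ ∃ s ∈ S, s * f ∈ I := by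
  rw [hIbar, Ideal.mem_comap]
  constructor
  · intro h
    obtain ⟨⟨a, s⟩, hx⟩ := (IsLocalization.mem_map_algebraMap_iff S (Localization S)).1 h
    rw [← map_mul, ← sub_eq_zero, ← map_sub] at hx
    obtain ⟨t, ht⟩ := (IsLocalization.map_eq_zero_iff S (Localization S) _).1 hx
    refine ⟨t * s, mul_mem t.2 s.2, ?_⟩
    have : (t : MvPolynomial (Fin n) K) * (f * s - a) = 0 := ht
    have h2 : (t : MvPolynomial (Fin n) K) * s * f = t * a := by ring_nf; linear_combination this
    rw [h2]
    exact Ideal.mul_mem_left _ _ a.2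
  · rintro ⟨s, hsS, hsf⟩
    have h1 : algebraMap (MvPolynomial (Fin n) K) (Localization S) (s * f) ∈
        Ideal.map (algebraMap (MvPolynomial (Fin n) K) (Localization S)) I :=
      Ideal.mem_map_of_mem _ hsf
    rw [map_mul] at h1
    obtain ⟨u, hu⟩ := IsLocalization.map_units (Localization S) ⟨s, hsS⟩
    have := Ideal.mul_mem_left _ (↑u⁻¹) h1
    rwa [← mul_assoc, ← hu, u.inv_mul, one_mul] at this
omit hnormal hlocal in
theorem monomial_mem_sup (I : Ideal (MvPolynomial (Fin n) K)) (k : ℕ)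
    (U : Submodule K (MvPolynomial (Fin n) K))
    (hW : ∀ μ ∉ leadSetI ord I, (monomial μ (1:K) : MvPolynomial (Fin n) K) ∈ U)
    (hI : ∀ g ∈ I, g ∈ U)
    (hT : ∀ β : Fin n →₀ ℕ, k ≤ ∑ i, β i → (monomial β (1:K) : MvPolynomial (Fin n) K) ∈ U)
    (β : Fin n →₀ ℕ) : (monomial β (1:K) : MvPolynomial (Fin n) K) ∈ U := by
  classical
  set Fk := (deg_finite (n := n) k).toFinset with hFkdef
  suffices key : ∀ N : ℕ, ∀ β, (Fk.filter fun γ => ord.lt γ β).card = N →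
      (monomial β (1:K) : MvPolynomial (Fin n) K) ∈ U from key _ β rfl
  intro N
  induction N using Nat.strong_induction_on with
  | _ N IH =>
  intro β hN
  by_cases hdeg : k ≤ ∑ i, β i
  · exact hT β hdeg
  by_cases hstd : β ∉ leadSetI ord I
  · exact hW β hstd
  rw [not_not] at hstd
  obtain ⟨g, hgI, hg0, hβ⟩ := hstd
  have hβsupp : β ∈ g.support := by rw [hβ]; exact lm_mem_support ord hg0
  set c := MvPolynomial.coeff β g with hcdef
  have hc : c ≠ 0 := MvPolynomial.mem_support_iff.1 hβsupp
  set h := g - monomial β c with hhdef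
  have hsupph : ∀ γ ∈ h.support, γ ∈ g.support ∧ γ ≠ β := by
    intro γ hγ
    rw [MvPolynomial.mem_support_iff, hhdef, MvPolynomial.coeff_sub,
      MvPolynomial.coeff_monomial] at hγ
    by_cases hγβ : γ = β
    · exfalso; apply hγ; rw [if_pos hγβ.symm, hγβ, hcdef, sub_self]
    · refine ⟨MvPolynomial.mem_support_iff.2 ?_, hγβ⟩
      rwa [if_neg (fun hh => hγβ hh.symm), sub_zero] at hγ
  have hrepr : (monomial β (1:K) : MvPolynomial (Fin n) K) = c⁻¹ • g - c⁻¹ • h := by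
    rw [← smul_sub, hhdef, sub_sub_cancel, MvPolynomial.smul_monomial,
      smul_eq_mul, inv_mul_cancel₀ hc]
  have hhU : h ∈ U := by
    rw [h.as_sum]
    apply Submodule.sum_mem
    intro γ hγ
    obtain ⟨hγg, hγne⟩ := hsupph γ hγ
    have hγβ : ord.lt γ β := LO.lt_of_le_of_ne ord (hβ ▸ le_lm ord hγg) hγne
    have hPγ : (monomial γ (1:K) : MvPolynomial (Fin n) K) ∈ U := by
      by_cases hdγ : k ≤ ∑ i, γ i
      · exact hT γ hdγ
      · refine IH ((Fk.filter fun δ => ord.lt δ γ).card) ?_ γ rfl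
        rw [← hN]
        apply Finset.card_lt_card
        constructor
        · intro δ hδ
          rw [Finset.mem_filter] at hδ ⊢
          exact ⟨hδ.1, LO.lt_trans ord hδ.2 hγβ⟩
        · intro hsub
          have hγmem : γ ∈ Fk.filter fun δ => ord.lt δ β := by
            rw [Finset.mem_filter]
            exact ⟨by rw [hFkdef, Set.Finite.mem_toFinset]; exact not_le.1 hdγ, hγβ⟩
          have := hsub hγmem
          rw [Finset.mem_filter] at this
          exact LO.lt_irrefl ord this.2
    have : (monomial γ (MvPolynomial.coeff γ h) : MvPolynomial (Fin n) K)
        = MvPolynomial.coeff γ h • monomial γ (1:K) := by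
      rw [MvPolynomial.smul_monomial, smul_eq_mul, mul_one]
    rw [this]
    exact Submodule.smul_mem _ _ hPγ
  rw [hrepr]
  exact sub_mem (Submodule.smul_mem _ _ (hI g hgI)) (Submodule.smul_mem _ _ hhU)
set_option synthInstance.maxHeartbeats 1000000 in
set_option maxHeartbeats 1000000 in
omit hnormal hlocal in
theorem krull_step {S : Submonoid (MvPolynomial (Fin n) K)}
    {P : Ideal (MvPolynomial (Fin n) K)}
    (hP : P = RingHom.ker (constantCoeff : MvPolynomial (Fin n) K →+* K))
    (hSP : S = P.primeCompl (hp := hP ▸ RingHom.ker_isPrime _))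
    {I Ibar : Ideal (MvPolynomial (Fin n) K)}
    (hIbar : Ibar = Ideal.comap
      (algebraMap (MvPolynomial (Fin n) K) (Localization S))
      (Ideal.map (algebraMap (MvPolynomial (Fin n) K) (Localization S)) I))
    (a : MvPolynomial (Fin n) K)
    (ha : ∀ k : ℕ, ∃ b ∈ Ibar, a - b ∈ P ^ k) : a ∈ Ibar := by
  by_cases htop : Ibar = ⊤
  · rw [htop]; trivial
  haveI hPprime : P.IsPrime := hP ▸ RingHom.ker_isPrime _
  subst hSP
  let φ := algebraMap (MvPolynomial (Fin n) K) (Localization.AtPrime P)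
  set Ie := Ideal.map φ I with hIe_def
  have hIe : Ie ≠ ⊤ := fun h => htop (by rw [hIbar, h, Ideal.comap_top])
  haveI := Ideal.Quotient.nontrivial_iff.mpr hIe
  haveI : IsNoetherianRing (Localization.AtPrime P) :=
    IsLocalization.isNoetherianRing P.primeCompl _ inferInstance
  haveI : IsLocalRing (Localization.AtPrime P ⧸ Ie) :=
    IsLocalRing.of_surjective' (Ideal.Quotient.mk Ie) Ideal.Quotient.mk_surjective
  set ψ := (Ideal.Quotient.mk Ie).comp φ with hψ
  set J := Ideal.map ψ P with hJdef
  have hJ : J ≠ ⊤ := by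
    intro h
    have h1 : J = Ideal.map (Ideal.Quotient.mk Ie) (Ideal.map φ P) := by
      rw [Ideal.map_map]
    rw [Localization.AtPrime.map_eq_maximalIdeal] at h1
    have h2 := Ideal.comap_map_of_surjective (Ideal.Quotient.mk Ie)
      Ideal.Quotient.mk_surjective (IsLocalRing.maximalIdeal (Localization.AtPrime P))
    rw [← h1, h, Ideal.comap_top, ← RingHom.ker_eq_comap_bot, Ideal.mk_ker] at h2
    have hIeM : Ie ≤ IsLocalRing.maximalIdeal (Localization.AtPrime P) :=
      IsLocalRing.le_maximalIdeal hIe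
    have : (⊤ : Ideal (Localization.AtPrime P)) ≤
        IsLocalRing.maximalIdeal (Localization.AtPrime P) := by
      rw [h2]; exact sup_le le_rfl hIeM
    exact (IsLocalRing.maximalIdeal.isMaximal _).ne_top (top_le_iff.1 this)
  have hKrull : ⨅ i : ℕ, J ^ i = ⊥ := Ideal.iInf_pow_eq_bot_of_isLocalRing (R := Localization.AtPrime P ⧸ Ie) J hJ
  have haJ : ∀ k, ψ a ∈ J ^ k := by
    intro k
    obtain ⟨b, hb, hab⟩ := ha k
    have h1 : ψ b = 0 := by
      rw [hψ, RingHom.comp_apply, Ideal.Quotient.eq_zero_iff_mem]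
      rw [hIbar, Ideal.mem_comap] at hb
      exact hb
    have h2 : ψ (a - b) ∈ J ^ k := by
      have := Ideal.mem_map_of_mem ψ hab
      have key : ∀ m : ℕ, Ideal.map ψ (P ^ m) ≤ J ^ m := by
        intro m
        induction m with
        | zero =>
          exact le_of_le_of_eq le_top ((Submodule.pow_zero J).trans Ideal.one_eq_top).symm
        | succ m ih =>
          have e1 : Ideal.map ψ (P ^ (m + 1)) = Ideal.map ψ (P ^ m) * Ideal.map ψ P :=
            (congrArg (Ideal.map ψ) (pow_succ P m)).trans (Ideal.map_mul ψ _ _)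
          have e : J ^ m * J = J ^ (m + 1) := (Submodule.pow_succ J).symm
          exact le_trans (le_of_eq e1) (le_trans (Ideal.mul_mono ih le_rfl) (le_of_eq e))
      exact key k this
    have h3 : ψ a = ψ (a - b) + ψ b := by rw [map_sub]; ring
    rw [h3, h1, add_zero]; exact h2
  have hψa : ψ a = 0 := by
    have : ψ a ∈ (⊥ : Ideal (Localization.AtPrime P ⧸ Ie)) := by
      rw [← hKrull]
      exact Submodule.mem_iInf _ |>.2 haJ
    simpa using this
  rw [hIbar, Ideal.mem_comap]
  rw [hψ, RingHom.comp_apply, Ideal.Quotient.eq_zero_iff_mem] at hψa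
  exact hψa
omit hnormal hlocal in
theorem supp_of_mem_span {Bset : Set (Fin n →₀ ℕ)} {f : MvPolynomial (Fin n) K}
    (hf : f ∈ Submodule.span K ((fun μ => (monomial μ (1:K) : MvPolynomial (Fin n) K)) '' Bset)) :
    ∀ γ ∈ f.support, γ ∈ Bset := by
  classical
  induction hf using Submodule.span_induction with
  | mem x hx =>
    obtain ⟨μ, hμ, rfl⟩ := hx
    intro γ hγ
    rw [MvPolynomial.support_monomial, if_neg (one_ne_zero : (1:K) ≠ 0)] at hγ
    rwa [Finset.mem_singleton.1 hγ]
  | zero => simp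
  | add x y _ _ ihx ihy =>
    intro γ hγ
    rcases Finset.mem_union.1 (MvPolynomial.support_add hγ) with h | h
    exacts [ihx γ h, ihy γ h]
  | smul c x _ ihx =>
    intro γ hγ
    exact ihx γ (MvPolynomial.support_smul hγ)

set_option maxHeartbeats 1000000 in
set_option synthInstance.maxHeartbeats 1000000 in
theorem indep_std {S : Submonoid (MvPolynomial (Fin n) K)}
    (hS : ∀ g : MvPolynomial (Fin n) K, g ∈ S ↔ (g ≠ 0 ∧ leadMonomial ord g = 0))
    {I Ibar : Ideal (MvPolynomial (Fin n) K)}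
    (hIbar : Ibar = Ideal.comap
      (algebraMap (MvPolynomial (Fin n) K) (Localization S))
      (Ideal.map (algebraMap (MvPolynomial (Fin n) K) (Localization S)) I)) :
    LinearIndependent K (fun μ : {μ : Fin n →₀ ℕ // μ ∉ leadSetI ord I} =>
      Ideal.Quotient.mk Ibar (monomial μ.1 (1:K))) := by
  classical
  set Bset : Set (Fin n →₀ ℕ) := {μ | μ ∉ leadSetI ord I} with hBset
  set w : {μ : Fin n →₀ ℕ // μ ∉ leadSetI ord I} → MvPolynomial (Fin n) K :=
    fun μ => monomial μ.1 1 with hw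
  have hwind : LinearIndependent K w := by
    have h1 := (MvPolynomial.basisMonomials (Fin n) K).linearIndependent
    have h2 := h1.comp (fun μ : {μ : Fin n →₀ ℕ // μ ∉ leadSetI ord I} => μ.1)
      Subtype.val_injective
    rw [MvPolynomial.coe_basisMonomials] at h2
    exact h2
  let π := (Ideal.Quotient.mkₐ K Ibar).toLinearMap
  have hker : ∀ x, π x = 0 ↔ x ∈ Ibar := fun x => Ideal.Quotient.eq_zero_iff_mem
  have hdisj : ∀ f ∈ Submodule.span K (Set.range w), f ∈ LinearMap.ker π → f = 0 := by
    intro f hfspan hfker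
    by_contra hf0
    have hfI : f ∈ Ibar := (hker f).1 hfker
    obtain ⟨s, hsS, hsf⟩ := (mem_Ibar_iff (K := K) hIbar f).1 hfI
    have hs0 : MvPolynomial.coeff 0 s ≠ 0 :=
      (mem_S_iff (K := K) ord hnormal hlocal hS s).1 hsS
    obtain ⟨hne, hlm⟩ := lm_mul_unit (K := K) ord hnormal hlocal hs0 hf0
    have hmem : leadMonomial ord (s * f) ∈ leadSetI ord I := ⟨s * f, hsf, hne, rfl⟩
    rw [hlm] at hmem
    have hrange : Set.range w = (fun μ => (monomial μ (1:K) : MvPolynomial (Fin n) K)) '' Bset := by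
      rw [hw]
      ext y
      constructor
      · rintro ⟨μ, rfl⟩; exact ⟨μ.1, μ.2, rfl⟩
      · rintro ⟨μ, hμ, rfl⟩; exact ⟨⟨μ, hμ⟩, rfl⟩
    rw [hrange] at hfspan
    exact supp_of_mem_span (K := K) hfspan _ (lm_mem_support ord hf0) hmem
  have hbot : Disjoint (Submodule.span K (Set.range w)) (LinearMap.ker π) :=
    Submodule.disjoint_def.2 hdisj
  exact hwind.map hbot
end B
theorem monomial_mem_pow {n : ℕ} {K : Type} [Field K] (β : Fin n →₀ ℕ) :
    (monomial β (1:K) : MvPolynomial (Fin n) K) ∈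
      (RingHom.ker (constantCoeff : MvPolynomial (Fin n) K →+* K)) ^ (∑ i, β i) := by
  classical
  induction β using Finsupp.induction with
  | zero =>
    simp only [Finsupp.coe_zero, Pi.zero_apply, Finset.sum_const_zero, pow_zero,
      Ideal.one_eq_top]
    trivial
  | single_add a b f ha hb ih =>
    have hsum : (∑ i, (Finsupp.single a b + f) i) = b + ∑ i, f i := by
      simp only [Finsupp.add_apply, Finsupp.single_apply, Finset.sum_add_distrib]
      congr 1
      simp [Finset.sum_ite_eq]
    rw [hsum]
    have hmul : (monomial (Finsupp.single a b + f) (1:K) : MvPolynomial (Fin n) K)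
        = monomial (Finsupp.single a b) 1 * monomial f 1 := by
      rw [MvPolynomial.monomial_mul, mul_one]
    rw [hmul, ← MvPolynomial.X_pow_eq_monomial, pow_add]
    apply Ideal.mul_mem_mul _ ih
    apply Ideal.pow_mem_pow
    rw [RingHom.mem_ker, MvPolynomial.constantCoeff_X]


set_option maxHeartbeats 2000000 in
set_option synthInstance.maxHeartbeats 1000000 in
/-- for a normal local order and any ideal `I`,
`dim_K K[x]/Ī` equals the cardinality of the set of monomials not in `L(I)`. -/
theorem dim_quotient_eq_card_nonlead {n : ℕ} {K : Type} [Field K]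
    (ord : LinearOrder (Fin n →₀ ℕ))
    (hnormal : ∀ (f : MvPolynomial (Fin n) K), f ≠ 0 → ∀ α : Fin n →₀ ℕ,
      ord.lt α 0 → ord.lt (leadMonomial ord (monomial α (1 : K) * f))
        (leadMonomial ord f))
    (hlocal : ∀ i : Fin n, ord.lt (Finsupp.single i 1) 0)
    (I : Ideal (MvPolynomial (Fin n) K))
    (S : Submonoid (MvPolynomial (Fin n) K))
    (hS : ∀ g : MvPolynomial (Fin n) K,
      g ∈ S ↔ (g ≠ 0 ∧ leadMonomial ord g = 0))
    (Ibar : Ideal (MvPolynomial (Fin n) K))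
    (hIbar : Ibar = Ideal.comap
      (algebraMap (MvPolynomial (Fin n) K) (Localization S))
      (Ideal.map (algebraMap (MvPolynomial (Fin n) K) (Localization S)) I)) :
    Module.rank K (MvPolynomial (Fin n) K ⧸ Ibar) =
      Cardinal.mk {μ : Fin n →₀ ℕ // μ ∉ leadSetI ord I} := by

  classical
  have hv := indep_std ord hnormal hlocal hS hIbar
  by_cases hfin : Set.Finite {μ : Fin n →₀ ℕ | μ ∉ leadSetI ord I}
  · -- finite case
    set P : Ideal (MvPolynomial (Fin n) K) :=
      RingHom.ker (constantCoeff : MvPolynomial (Fin n) K →+* K) with hP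
    haveI hPprime : P.IsPrime := RingHom.ker_isPrime _
    have hSP : S = P.primeCompl := by
      ext g
      rw [mem_S_iff ord hnormal hlocal hS g]
      have h1 : g ∈ P.primeCompl ↔ ¬ (g ∈ P) := Iff.rfl
      have h2 : g ∈ P ↔ MvPolynomial.coeff 0 g = 0 := by
        rw [hP, RingHom.mem_ker]
        rfl
      rw [h1, h2]
    set W : Submodule K (MvPolynomial (Fin n) K) :=
      Submodule.span K ((fun μ => (monomial μ (1:K) : MvPolynomial (Fin n) K)) ''
        {μ | μ ∉ leadSetI ord I}) with hW
    haveI : FiniteDimensional K W := FiniteDimensional.span_of_finite K (hfin.image _)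
    set Dk : ℕ → Submodule K (MvPolynomial (Fin n) K) := fun k =>
      (Ibar.restrictScalars K) ⊔ ((P ^ k).restrictScalars K) with hDk
    have hDanti : ∀ k k', k ≤ k' → Dk k' ≤ Dk k := by
      intro k k' hk
      apply sup_le_sup_left
      intro x hx
      simp only [Submodule.restrictScalars_mem] at hx ⊢
      exact Ideal.pow_le_pow_right hk hx
    have hIIbar : I ≤ Ibar := by
      intro g hg
      rw [hIbar, Ideal.mem_comap]
      exact Ideal.mem_map_of_mem _ hg
    have hUk : ∀ (k : ℕ) (f : MvPolynomial (Fin n) K), f ∈ W ⊔ Dk k := by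
      intro k f
      have hmono : ∀ β : Fin n →₀ ℕ,
          (monomial β (1:K) : MvPolynomial (Fin n) K) ∈ W ⊔ Dk k := by
        intro β
        apply monomial_mem_sup ord I k
        · intro μ hμ
          exact Submodule.mem_sup_left (Submodule.subset_span ⟨μ, hμ, rfl⟩)
        · intro g hg
          exact Submodule.mem_sup_right (Submodule.mem_sup_left (by simpa using hIIbar hg))
        · intro γ hγ
          apply Submodule.mem_sup_right
          apply Submodule.mem_sup_right
          have h1 := monomial_mem_pow (K := K) γ
          have h2 : P ^ (∑ i, γ i) ≤ P ^ k := Ideal.pow_le_pow_right hγ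
          simpa using h2 (by rw [hP]; exact h1)
      rw [f.as_sum]
      apply Submodule.sum_mem
      intro v hv'
      have heq : (monomial v (MvPolynomial.coeff v f) : MvPolynomial (Fin n) K)
          = MvPolynomial.coeff v f • monomial v 1 := by
        rw [MvPolynomial.smul_monomial, smul_eq_mul, mul_one]
      rw [heq]
      exact Submodule.smul_mem _ _ (hmono v)
    set Nk : ℕ → Submodule K (MvPolynomial (Fin n) K) := fun k => W ⊓ Dk k with hNk
    haveI hNfd : ∀ k, FiniteDimensional K (Nk k) := fun k =>
      Submodule.finiteDimensional_of_le inf_le_left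
    set r : ℕ → ℕ := fun k => Module.finrank K (Nk k) with hr
    obtain ⟨k₀, hk₀⟩ := Nat.sInf_mem (⟨r 0, 0, rfl⟩ : {m | ∃ k, r k = m}.Nonempty)
    have hmin : ∀ k, sInf {m | ∃ k, r k = m} ≤ r k := fun k => Nat.sInf_le ⟨k, rfl⟩
    have hNstab : ∀ k, k₀ ≤ k → Nk k = Nk k₀ := by
      intro k hk
      have hle : Nk k ≤ Nk k₀ := inf_le_inf_left _ (hDanti _ _ hk)
      exact Submodule.eq_of_le_of_finrank_le hle (le_trans (le_of_eq hk₀) (hmin k))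
    have hspan : ∀ f : MvPolynomial (Fin n) K, ∃ w ∈ W, f - w ∈ Ibar := by
      intro f
      obtain ⟨w, hwW, d, hd, hfwd⟩ := Submodule.mem_sup.1 (hUk k₀ f)
      refine ⟨w, hwW, ?_⟩
      apply krull_step (K := K) hP hSP hIbar
      intro k
      set k' := max k k₀ with hk'
      obtain ⟨w', hw'W, d', hd', hfwd'⟩ := Submodule.mem_sup.1 (hUk k' f)
      have h5 : w + d = w' + d' := hfwd.trans hfwd'.symm
      have hww' : w - w' ∈ Nk k₀ := by
        refine Submodule.mem_inf.2 ⟨sub_mem hwW hw'W, ?_⟩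
        have heq : w - w' = d' - d := by linear_combination h5
        rw [heq]
        exact sub_mem (hDanti k₀ k' (le_max_right k k₀) hd') hd
      have hww'k' : w - w' ∈ Dk k' := by
        have := (hNstab k' (le_max_right k k₀)) ▸ hww'
        exact (Submodule.mem_inf.1 this).2
      have hfw : f - w ∈ Dk k' := by
        have heq : f - w = d' - (w - w') := by linear_combination hfwd'.symm
        rw [heq]
        exact sub_mem hd' hww'k'
      have hfwk : f - w ∈ Dk k := hDanti k k' (le_max_left k k₀) hfw
      obtain ⟨b, hb, c, hc, hbc⟩ := Submodule.mem_sup.1 hfwk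
      refine ⟨b, by simpa using hb, ?_⟩
      have heq : (f - w) - b = c := by linear_combination hbc.symm
      rw [heq]
      simpa using hc
    have hspan_top : ⊤ ≤ Submodule.span K (Set.range
        (fun μ : {μ : Fin n →₀ ℕ // μ ∉ leadSetI ord I} =>
          Ideal.Quotient.mk Ibar (monomial μ.1 (1:K)))) := by
      intro x _
      obtain ⟨f, rfl⟩ := Ideal.Quotient.mk_surjective (I := Ibar) x
      obtain ⟨w, hwW, hfw⟩ := hspan f
      have h1 : Ideal.Quotient.mk Ibar f = Ideal.Quotient.mk Ibar w := by
        rw [Ideal.Quotient.eq]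
        exact hfw
      rw [h1]
      have h2 : (Ideal.Quotient.mkₐ K Ibar).toLinearMap w ∈
          Submodule.map (Ideal.Quotient.mkₐ K Ibar).toLinearMap W := ⟨w, hwW, rfl⟩
      rw [hW, Submodule.map_span] at h2
      have h3 : (Ideal.Quotient.mkₐ K Ibar).toLinearMap ''
          ((fun μ => (monomial μ (1:K) : MvPolynomial (Fin n) K)) '' {μ | μ ∉ leadSetI ord I})
          = Set.range (fun μ : {μ : Fin n →₀ ℕ // μ ∉ leadSetI ord I} =>
            Ideal.Quotient.mk Ibar (monomial μ.1 (1:K))) := by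
        ext y
        constructor
        · rintro ⟨z, ⟨μ, hμ, rfl⟩, rfl⟩
          exact ⟨⟨μ, hμ⟩, rfl⟩
        · rintro ⟨μ, rfl⟩
          exact ⟨monomial μ.1 1, ⟨μ.1, μ.2, rfl⟩, rfl⟩
      rw [h3] at h2
      exact h2
    exact (Module.Basis.mk hv hspan_top).mk_eq_rank''.symm
  · -- infinite case
    haveI : Infinite {μ : Fin n →₀ ℕ // μ ∉ leadSetI ord I} :=
      Set.infinite_coe_iff.2 hfin
    have h1 : Cardinal.mk {μ : Fin n →₀ ℕ // μ ∉ leadSetI ord I} ≤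
        Module.rank K (MvPolynomial (Fin n) K ⧸ Ibar) := hv.cardinal_le_rank
    have h2 : Module.rank K (MvPolynomial (Fin n) K ⧸ Ibar) ≤ Cardinal.aleph0 := by
      refine le_trans ((Ideal.Quotient.mkₐ K Ibar).toLinearMap.rank_le_of_surjective
        Ideal.Quotient.mk_surjective) ?_
      rw [← (MvPolynomial.basisMonomials (Fin n) K).mk_eq_rank'']
      exact Cardinal.mk_le_aleph0
    have h3 : Cardinal.mk {μ : Fin n →₀ ℕ // μ ∉ leadSetI ord I} = Cardinal.aleph0 :=
      le_antisymm Cardinal.mk_le_aleph0 (Cardinal.aleph0_le_mk _)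
    rw [h3]
    exact le_antisymm h2 (h3 ▸ h1)
end
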